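/- arXiv:1601.08142 — 8 statements merged into one kernel-verified Lean document; each statement's English description precedes it below -/
import Mathlib

section
/- Let G be a locally compact second-countable group with a Borel action on a standard Borel space X. Then the free part of the action, {x ∈ X : ∀ g ∈ G, g·x = x → g = e}, is a Borel subset of X. -/
/-!
Fix a bounded injective Borel map `f : X → ℝ`, a compact neighbourhood `W` of `1` and a right
Haar measure `ν`. The displacement `D(g, x) = ∫_W |f(wg • x) - f(w • x)| dν(w)` vanishes exactly
when `g • x = x`, is Borel in `x`, and is continuous in `g` because right translation is
continuous in `L¹(ν)`. The non-free part `{x | ∃ g ≠ 1, D(g, x) = 0}` is then a countable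
union, over open sets `U` with compact closure avoiding `1`, of the sets
`{x | ∃ g ∈ closure U, D(g, x) = 0}`; by compactness each of these equals
`⋂ ε, ⋃ d, {x | D(d, x) < ε}` with `d` ranging over a countable dense subset of `U`.
-/

open MeasureTheory Filter Topology Set
open scoped Pointwise

section Caratheodory

variable {G X : Type*} [TopologicalSpace G] [MeasurableSpace X] {F : G → X → ℝ}

theorem measurableSet_exists_mem_closure_eq_zero [TopologicalSpace.SeparableSpace G]
    (hcont : ∀ x, Continuous (F · x)) (hmeas : ∀ g, Measurable (F g)) (hnonneg : ∀ g x, 0 ≤ F g x)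
    {U : Set G} (hU : IsOpen U) (hUc : IsCompact (closure U)) :
    MeasurableSet {x | ∃ g ∈ closure U, F g x = 0} := by
  obtain ⟨D, hDc, hDd⟩ := TopologicalSpace.exists_countable_dense G
  suffices h : {x | ∃ g ∈ closure U, F g x = 0} =
      ⋂ n : ℕ, ⋃ d ∈ D ∩ U, {x | F d x < 1 / (n + 1)} by
    rw [h]
    exact .iInter fun n => .biUnion (hDc.mono inter_subset_left) fun d _ =>
      measurableSet_lt (hmeas d) measurable_const
  ext x
  simp only [mem_ofPred_eq, mem_iInter, mem_iUnion, exists_prop, mem_inter_iff]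
  constructor
  · rintro ⟨g, hgU, hgx⟩ n
    have hV : IsOpen {h | F h x < 1 / (n + 1)} := isOpen_lt (hcont x) continuous_const
    obtain ⟨d, ⟨hdV, hdU⟩, hdD⟩ := hDd.inter_open_nonempty _ (hV.inter hU)
      (mem_closure_iff.1 hgU _ hV (by rw [mem_ofPred_eq, hgx]; positivity))
    exact ⟨d, ⟨hdD, hdU⟩, hdV⟩
  · intro h
    -- Sublevel sets of `F · x` in the compact set `closure U` shrink to a zero of `F · x`.
    let C : ℕ → Set G := fun n => closure U ∩ {g | F g x ≤ 1 / (n + 1)}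
    have hC_closed : ∀ n, IsClosed (C n) := fun n =>
      isClosed_closure.inter (isClosed_le (hcont x) continuous_const)
    have hC_anti : ∀ n, C (n + 1) ⊆ C n := fun n =>
      inter_subset_inter_right _ fun g (hg : F g x ≤ _) =>
        hg.trans (by exact_mod_cast Nat.one_div_le_one_div n.le_succ)
    have hC_ne : ∀ n, (C n).Nonempty := fun n => by
      obtain ⟨d, ⟨-, hdU⟩, hd⟩ := h n
      exact ⟨d, subset_closure hdU, hd.le⟩
    obtain ⟨a, ha⟩ := IsCompact.nonempty_iInter_of_sequence_nonempty_isCompact_isClosed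
      C hC_anti hC_ne (hUc.inter_right (isClosed_le (hcont x) continuous_const)) hC_closed
    have ha : ∀ n, a ∈ C n := mem_iInter.1 ha
    exact ⟨a, (ha 0).1, le_antisymm
      (ge_of_tendsto' tendsto_one_div_add_atTop_nhds_zero_nat fun n => (ha n).2) (hnonneg a x)⟩

theorem measurableSet_exists_mem_eq_zero [SecondCountableTopology G] [LocallyCompactSpace G]
    [RegularSpace G] (hcont : ∀ x, Continuous (F · x)) (hmeas : ∀ g, Measurable (F g))
    (hnonneg : ∀ g x, 0 ≤ F g x) {S : Set G} (hS : IsOpen S) :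
    MeasurableSet {x | ∃ g ∈ S, F g x = 0} := by
  have hV : ∀ g : S, ∃ V : Set G, IsOpen V ∧ {g.1} ⊆ V ∧ closure V ⊆ S ∧ IsCompact (closure V) :=
    fun g => exists_open_between_and_isCompact_closure isCompact_singleton hS
      (singleton_subset_iff.2 g.2)
  choose V hV_open hgV hVS hVc using hV
  obtain ⟨T, hTc, hT⟩ := TopologicalSpace.isOpen_iUnion_countable V hV_open
  suffices h : {x | ∃ g ∈ S, F g x = 0} = ⋃ i ∈ T, {x | ∃ g ∈ closure (V i), F g x = 0} by
    rw [h]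
    exact .biUnion hTc fun i _ =>
      measurableSet_exists_mem_closure_eq_zero hcont hmeas hnonneg (hV_open i) (hVc i)
  ext x
  simp only [mem_ofPred_eq, mem_iUnion, exists_prop]
  constructor
  · rintro ⟨g, hgS, hgx⟩
    have hg : g ∈ ⋃ i ∈ T, V i := hT ▸ mem_iUnion.2 ⟨⟨g, hgS⟩, hgV _ rfl⟩
    obtain ⟨i, hiT, hgi⟩ := mem_iUnion₂.1 hg
    exact ⟨i, hiT, g, subset_closure hgi, hgx⟩
  · rintro ⟨i, -, g, hgV, hgx⟩
    exact ⟨g, hVS i hgV, hgx⟩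

end Caratheodory

section RightTranslation

variable {G : Type*} [Group G] [TopologicalSpace G] [IsTopologicalGroup G] [MeasurableSpace G]
  [BorelSpace G] {ν : Measure G} [ν.IsMulRightInvariant] [IsLocallyFiniteMeasure ν]
  [ν.InnerRegularCompactLTTop]

theorem tendsto_integral_abs_sub_comp_mul_right {b : G → ℝ} (hb : Integrable b ν) (g₀ : G) :
    Tendsto (fun g => ∫ w, |b (w * g) - b (w * g₀)| ∂ν) (𝓝 g₀) (𝓝 0) := by
  let R : C(G, C(G, G)) := ContinuousMap.curry ⟨fun p : G × G => p.2 * p.1, by fun_prop⟩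
  have hR : ∀ g, MeasurePreserving (R g) ν ν := measurePreserving_mul_right ν
  let u : G → Lp ℝ 1 ν := fun g => Lp.compMeasurePreserving (R g) (hR g) (hb.toL1 b)
  have hu : Tendsto u (𝓝 g₀) (𝓝 (u g₀)) :=
    tendsto_const_nhds.compMeasurePreservingLp (R.continuous.tendsto g₀) hR (hR g₀)
      ENNReal.one_ne_top
  have hu_coe : ∀ g, u g =ᵐ[ν] fun w => b (w * g) := fun g =>
    (Lp.coeFn_compMeasurePreserving _ (hR g)).trans
      ((hR g).quasiMeasurePreserving.ae_eq_comp (hb.coeFn_toL1))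
  have hu_dist : ∀ g, ∫ w, |b (w * g) - b (w * g₀)| ∂ν = dist (u g) (u g₀) := fun g => by
    rw [dist_eq_norm, L1.norm_eq_integral_norm]
    refine integral_congr_ae ?_
    filter_upwards [Lp.coeFn_sub (u g) (u g₀), hu_coe g, hu_coe g₀] with w h h₁ h₂
    rw [Real.norm_eq_abs, h, Pi.sub_apply, h₁, h₂]
  simpa only [hu_dist] using (tendsto_iff_dist_tendsto_zero.1 hu)

theorem tendsto_setIntegral_abs_sub_comp_mul_right [LocallyCompactSpace G] [T2Space G]
    {a : G → ℝ} (ha : LocallyIntegrable a ν) {W : Set G} (hW : IsCompact W) (g₀ : G) :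
    Tendsto (fun g => ∫ w in W, |a (w * g) - a (w * g₀)| ∂ν) (𝓝 g₀) (𝓝 0) := by
  obtain ⟨U, hUc, hU⟩ := exists_compact_mem_nhds g₀
  have hWU : IsCompact (W * U) := hW.mul hUc
  set b := (W * U).indicator a
  have hb : Integrable b ν :=
    (ha.integrableOn_isCompact hWU).integrable_indicator hWU.measurableSet
  have hb_int : ∀ g, Integrable (fun w => |b (w * g) - b (w * g₀)|) ν := fun g =>
    ((hb.comp_mul_right g).sub (hb.comp_mul_right g₀)).abs
  -- On `W`, translating by elements of `U` only sees `a` on `W * U`, where it agrees with `b`.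
  have hle : ∀ g ∈ U, ∫ w in W, |a (w * g) - a (w * g₀)| ∂ν ≤ ∫ w, |b (w * g) - b (w * g₀)| ∂ν :=
    fun g hg => calc
      ∫ w in W, |a (w * g) - a (w * g₀)| ∂ν = ∫ w in W, |b (w * g) - b (w * g₀)| ∂ν :=
        setIntegral_congr_fun hW.measurableSet fun w hw => by
          simp only [b, indicator_of_mem (mul_mem_mul hw hg),
            indicator_of_mem (mul_mem_mul hw (mem_of_mem_nhds hU))]
      _ ≤ ∫ w, |b (w * g) - b (w * g₀)| ∂ν :=
        setIntegral_le_integral (hb_int g) (.of_forall fun _ => abs_nonneg _)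
  exact squeeze_zero' (.of_forall fun _ => setIntegral_nonneg hW.measurableSet
    fun _ _ => abs_nonneg _) (eventually_of_mem hU hle)
    (tendsto_integral_abs_sub_comp_mul_right hb g₀)

end RightTranslation

section Displacement

variable {G X : Type*} [Group G] [MeasurableSpace G] [MulAction G X]

noncomputable def displacement (ν : Measure G) (W : Set G) (f : X → ℝ) (g : G) (x : X) : ℝ :=
  ∫ w in W, |f ((w * g) • x) - f (w • x)| ∂ν

variable {ν : Measure G} {W : Set G} {f : X → ℝ}

theorem displacement_nonneg (g : G) (x : X) : 0 ≤ displacement ν W f g x :=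
  integral_nonneg fun _ => abs_nonneg _

variable [MeasurableSpace X] [MeasurableMul G]

theorem measurable_abs_sub_comp_smul (hB : Measurable fun p : G × X => p.1 • p.2)
    (hf : Measurable f) (g h : G) :
    Measurable fun p : G × X => |f ((p.1 * g) • p.2) - f ((p.1 * h) • p.2)| := by
  have hB' : ∀ g : G, Measurable fun p : G × X => (p.1 * g) • p.2 := fun g =>
    hB.comp ((measurable_fst.mul_const g).prodMk measurable_snd)
  exact ((hf.comp (hB' g)).sub (hf.comp (hB' h))).abs

theorem measurable_displacement [SFinite ν] (hB : Measurable fun p : G × X => p.1 • p.2)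
    (hf : Measurable f) (g : G) : Measurable (displacement ν W f g) := by
  have h := measurable_abs_sub_comp_smul hB hf g 1
  simp only [mul_one] at h
  exact (h.stronglyMeasurable.integral_prod_left' (μ := ν.restrict W)).measurable

theorem integrableOn_abs_sub_comp_smul (hB : Measurable fun p : G × X => p.1 • p.2)
    (hf : Measurable f) {C : ℝ} (hfC : ∀ y, |f y| ≤ C) (hW : ν W ≠ ⊤) (g h : G) (x : X) :
    IntegrableOn (fun w => |f ((w * g) • x) - f ((w * h) • x)|) W ν := by
  refine .of_bound hW.lt_top
    ((measurable_abs_sub_comp_smul hB hf g h).comp measurable_prodMk_right).aestronglyMeasurable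
    (2 * C) (.of_forall fun w => ?_)
  rw [Real.norm_eq_abs, abs_abs]
  linarith [abs_sub (f ((w * g) • x)) (f ((w * h) • x)), hfC ((w * g) • x), hfC ((w * h) • x)]

theorem displacement_eq_zero_iff (hB : Measurable fun p : G × X => p.1 • p.2)
    (hf : Measurable f) (hf_inj : Function.Injective f) {C : ℝ} (hfC : ∀ y, |f y| ≤ C)
    (hW₀ : ν W ≠ 0) (hW : ν W ≠ ⊤) {g : G} {x : X} :
    displacement ν W f g x = 0 ↔ g • x = x := by
  refine ⟨fun h => ?_, fun hgx => by simp [displacement, mul_smul, hgx]⟩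
  have hint := integrableOn_abs_sub_comp_smul hB hf hfC hW g 1 x
  simp only [mul_one] at hint
  have hae := (integral_eq_zero_iff_of_nonneg (fun _ => abs_nonneg _) hint).1 h
  have : (ae (ν.restrict W)).NeBot := ae_neBot.2 (by simpa [Measure.restrict_eq_zero] using hW₀)
  obtain ⟨w, hw⟩ := hae.exists
  have : (w * g) • x = w • x := hf_inj (sub_eq_zero.1 (abs_eq_zero.1 hw))
  rwa [mul_smul, smul_left_cancel_iff] at this

theorem continuous_displacement [TopologicalSpace G] [IsTopologicalGroup G] [BorelSpace G]
    [LocallyCompactSpace G] [T2Space G] [ν.IsMulRightInvariant] [IsLocallyFiniteMeasure ν]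
    [ν.InnerRegularCompactLTTop] (hB : Measurable fun p : G × X => p.1 • p.2)
    (hf : Measurable f) {C : ℝ} (hfC : ∀ y, |f y| ≤ C) (hW : IsCompact W) (x : X) :
    Continuous fun g => displacement ν W f g x := by
  set a : G → ℝ := fun w => f (w • x)
  have ha : LocallyIntegrable a ν := (locallyIntegrable_const C).mono
    (hf.comp (hB.comp measurable_prodMk_right)).aestronglyMeasurable
    (.of_forall fun w => (hfC _).trans (le_abs_self C))
  have hW' : ν W ≠ ⊤ := hW.measure_lt_top.ne
  have hint : ∀ g h, IntegrableOn (fun w => |a (w * g) - a (w * h)|) W ν :=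
    fun g h => integrableOn_abs_sub_comp_smul hB hf hfC hW' g h x
  refine continuous_iff_continuousAt.2 fun g₀ => tendsto_iff_dist_tendsto_zero.2 <|
    squeeze_zero (fun _ => dist_nonneg) (fun g => ?_)
      (tendsto_setIntegral_abs_sub_comp_mul_right ha hW g₀)
  have hD : ∀ g, displacement ν W f g x = ∫ w in W, |a (w * g) - a (w * 1)| ∂ν := fun g => by
    simp only [displacement, mul_one, a]
  calc dist (displacement ν W f g x) (displacement ν W f g₀ x)
      = |∫ w in W, (|a (w * g) - a (w * 1)| - |a (w * g₀) - a (w * 1)|) ∂ν| := by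
        rw [Real.dist_eq, hD, hD, integral_sub (hint g 1) (hint g₀ 1)]
    _ ≤ ∫ w in W, |(|a (w * g) - a (w * 1)| - |a (w * g₀) - a (w * 1)|)| ∂ν :=
        abs_integral_le_integral_abs
    _ ≤ ∫ w in W, |a (w * g) - a (w * g₀)| ∂ν :=
        integral_mono_of_nonneg (.of_forall fun _ => abs_nonneg _) (hint g g₀)
          (.of_forall fun w => by
            simpa only [sub_sub_sub_cancel_right] using abs_abs_sub_abs_le_abs_sub
              (a (w * g) - a (w * 1)) (a (w * g₀) - a (w * 1)))

end Displacement

theorem free_part_is_borel_general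
    (G : Type*) [Group G] [TopologicalSpace G] [IsTopologicalGroup G]
    [LocallyCompactSpace G] [PolishSpace G]
    [MeasurableSpace G] [BorelSpace G]
    (X : Type*) [MeasurableSpace X] [StandardBorelSpace X]
    [MulAction G X]
    (hBorel : Measurable fun p : G × X => p.1 • p.2) :
    MeasurableSet {x : X | ∀ g : G, g • x = x → g = 1} := by
  obtain ⟨e, he⟩ := exists_measurableEmbedding_real X
  set f : X → ℝ := fun y => Real.arctan (e y)
  have hf : Measurable f := Real.measurable_arctan.comp he.measurable
  have hf_inj : Function.Injective f := Real.arctan_injective.comp he.injective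
  have hfC : ∀ y, |f y| ≤ Real.pi / 2 := fun y => abs_le.2
    ⟨(Real.neg_pi_div_two_lt_arctan _).le, (Real.arctan_lt_pi_div_two _).le⟩
  set ν : Measure G := (Measure.haar : Measure G).inv
  obtain ⟨W, hW, hW1⟩ := exists_compact_mem_nhds (1 : G)
  have hW₀ : ν W ≠ 0 := (ν.measure_pos_of_mem_nhds hW1).ne'
  have hnonfree : {x : X | ∀ g : G, g • x = x → g = 1}ᶜ =
      {x | ∃ g ∈ ({1}ᶜ : Set G), displacement ν W f g x = 0} := by
    ext x
    simp only [mem_compl_iff, mem_ofPred_eq, not_forall, exists_prop, mem_singleton_iff,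
      displacement_eq_zero_iff hBorel hf hf_inj hfC hW₀ hW.measure_lt_top.ne]
    exact exists_congr fun g => and_comm
  rw [← MeasurableSet.compl_iff, hnonfree]
  exact measurableSet_exists_mem_eq_zero (continuous_displacement hBorel hf hfC hW)
    (measurable_displacement hBorel hf) displacement_nonneg isOpen_compl_singleton

/-- For a Borel action of a locally compact second-countable (Polish) group `G` on a
standard Borel space `X`, the free part of the action is a Borel subset of `X`. -/
theorem free_part_is_borel
    (G : Type*) [Group G] [TopologicalSpace G] [IsTopologicalGroup G]
    [LocallyCompactSpace G] [SecondCountableTopology G] [PolishSpace G]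
    [MeasurableSpace G] [BorelSpace G]
    (X : Type*) [MeasurableSpace X] [StandardBorelSpace X]
    [MulAction G X]
    (hBorel : Measurable fun p : G × X => p.1 • p.2) :
    MeasurableSet {x : X | ∀ g : G, g • x = x → g = 1} :=
  free_part_is_borel_general G X hBorel
end

section
/- Let G be a locally compact Polish group with modular function Δ, acting on a probability space (X,μ) preserving μ. Suppose c: X → (0,∞) is a measurable function satisfying c(g·x) = Δ(g)·c(x) for all g ∈ G and almost all x ∈ X. Then Δ(g) = 1 for all g ∈ G, i.e., G is unimodular. -/
/-!
Pushing `μ` forward along `log ∘ c` gives a finite nonzero measure on `ℝ` that is invariant under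
translation by `log Δ(g)`. If `log Δ(g) ≠ 0`, the translates of one period interval tile `ℝ` and
all carry the same mass, which forces that mass, and hence the measure, to vanish.
-/

open MeasureTheory Set Function

theorem MeasureTheory.Measure.eq_zero_of_map_add_const_eq {ν : Measure ℝ} [IsFiniteMeasure ν]
    {t : ℝ} (ht : 0 < t) (h : ν.map (· + t) = ν) : ν = 0 := by
  set S : ℤ → Set ℝ := fun n => Ico (n • t) ((n + 1) • t)
  have hS_succ (n : ℤ) : ν (S (n + 1)) = ν (S n) := by
    conv_lhs => rw [← h]
    rw [Measure.map_apply (measurable_add_const t) measurableSet_Ico, preimage_add_const_Ico]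
    simp only [S, add_zsmul, one_zsmul, add_sub_cancel_right]
  have hS (n : ℤ) : ν (S n) = ν (S 0) := by
    induction n using Int.induction_on with
    | zero => rfl
    | succ n ih => rw [hS_succ, ih]
    | pred n ih => rw [← ih, ← hS_succ, sub_add_cancel]
  have hS_disj : Pairwise (Disjoint on S) := by
    simpa only [zero_add] using pairwise_disjoint_Ico_add_zsmul (0 : ℝ) t
  have huniv : ν univ = ∑' _ : ℤ, ν (S 0) := by
    rw [← iUnion_Ico_zsmul ht, measure_iUnion hS_disj fun _ => measurableSet_Ico, tsum_congr hS]
  have hS0 : ν (S 0) = 0 := by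
    by_contra hne
    exact measure_ne_top ν univ (huniv.trans (ENNReal.tsum_const_eq_top_of_ne_zero hne))
  rw [← Measure.measure_univ_eq_zero, huniv, hS0, tsum_zero]

theorem MeasureTheory.MeasurePreserving.map_add_const_eq_of_ae_comp_eq_add {X : Type*}
    [MeasurableSpace X] {μ : Measure X} {T : X → X} (hT : MeasurePreserving T μ μ)
    {f : X → ℝ} (hf : Measurable f) {t : ℝ} (hfT : f ∘ T =ᵐ[μ] fun x => f x + t) :
    (μ.map f).map (· + t) = μ.map f := by
  rw [Measure.map_map (measurable_add_const t) hf]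
  calc μ.map ((· + t) ∘ f) = μ.map (f ∘ T) := (Measure.map_congr hfT).symm
    _ = (μ.map T).map f := (Measure.map_map hf hT.measurable).symm
    _ = μ.map f := by rw [hT.map_eq]

theorem MeasureTheory.MeasurePreserving.eq_zero_of_ae_comp_eq_add {X : Type*}
    [MeasurableSpace X] {μ : Measure X} [IsFiniteMeasure μ] [NeZero μ] {T : X → X}
    (hT : MeasurePreserving T μ μ) {f : X → ℝ} (hf : Measurable f) {t : ℝ}
    (hfT : f ∘ T =ᵐ[μ] fun x => f x + t) : t = 0 := by
  have nonpos {f : X → ℝ} (hf : Measurable f) {t : ℝ} (hfT : f ∘ T =ᵐ[μ] fun x => f x + t) :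
      t ≤ 0 := le_of_not_gt fun ht =>
    NeZero.ne μ <| (Measure.map_eq_zero_iff hf.aemeasurable).1 <|
      Measure.eq_zero_of_map_add_const_eq ht (hT.map_add_const_eq_of_ae_comp_eq_add hf hfT)
  have hfT_neg : (fun x => -f x) ∘ T =ᵐ[μ] fun x => -f x + -t := by
    filter_upwards [hfT] with x hx
    simp only [Function.comp_apply] at hx ⊢
    rw [hx, neg_add]
  linarith [nonpos hf hfT, nonpos hf.neg hfT_neg]

theorem MeasureTheory.MeasurePreserving.eq_one_of_ae_comp_eq_mul {X : Type*}
    [MeasurableSpace X] {μ : Measure X} [IsFiniteMeasure μ] [NeZero μ] {T : X → X}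
    (hT : MeasurePreserving T μ μ) {c : X → ℝ} (hc : Measurable c) (hc_pos : ∀ x, 0 < c x)
    {d : ℝ} (hd : 0 < d) (hcT : ∀ᵐ x ∂μ, c (T x) = d * c x) : d = 1 := by
  have hlog : (fun x => Real.log (c x)) ∘ T =ᵐ[μ] fun x => Real.log (c x) + Real.log d := by
    filter_upwards [hcT] with x hx
    rw [Function.comp_apply, hx, Real.log_mul hd.ne' (hc_pos x).ne', add_comm]
  have hlog_d : Real.log d = 0 := hT.eq_zero_of_ae_comp_eq_add hc.log hlog
  rw [← Real.exp_log hd, hlog_d, Real.exp_zero]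

theorem unimodular_of_equivariant_density_general
    (G : Type*) [Group G]
    (Δ : G →* ℝ) (hΔpos : ∀ g, 0 < Δ g)
    (X : Type*) [MeasurableSpace X] (μ : Measure X) [IsProbabilityMeasure μ]
    [MulAction G X]
    (hmp : ∀ g : G, MeasurePreserving (fun x : X => g • x) μ μ)
    (c : X → ℝ) (hc : Measurable c) (hcpos : ∀ x, 0 < c x)
    (hcocycle : ∀ g : G, ∀ᵐ x ∂μ, c (g • x) = Δ g * c x) :
    ∀ g : G, Δ g = 1 := fun g =>
  (hmp g).eq_one_of_ae_comp_eq_mul hc hcpos (hΔpos g) (hcocycle g)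

/-- If a locally compact Polish group `G` with modular function `Δ` acts on a probability
space preserving the measure, and there is a positive measurable function `c` with
`c(g • x) = Δ(g) * c(x)` for all `g` and almost all `x`, then `Δ ≡ 1`, i.e. `G` is
unimodular. -/
theorem unimodular_of_equivariant_density
    (G : Type*) [Group G] [TopologicalSpace G] [IsTopologicalGroup G]
    [LocallyCompactSpace G] [PolishSpace G]
    [MeasurableSpace G] [BorelSpace G]
    (lam : Measure G) [lam.IsHaarMeasure]
    (Δ : G →* ℝ) (hΔpos : ∀ g, 0 < Δ g)
    (hΔmod : ∀ (g : G) (s : Set G), MeasurableSet s →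
      lam ((fun h => h * g) '' s) = ENNReal.ofReal (Δ g) * lam s)
    (X : Type*) [MeasurableSpace X] (μ : Measure X) [IsProbabilityMeasure μ]
    [MulAction G X]
    (hBorel : Measurable fun p : G × X => p.1 • p.2)
    (hmp : ∀ g : G, MeasurePreserving (fun x : X => g • x) μ μ)
    (c : X → ℝ) (hc : Measurable c) (hcpos : ∀ x, 0 < c x)
    (hcocycle : ∀ g : G, ∀ᵐ x ∂μ, c (g • x) = Δ g * c x) :
    ∀ g : G, Δ g = 1 :=
  unimodular_of_equivariant_density_general G Δ hΔpos X μ hmp c hc hcpos hcocycle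
end

section
/- Let (Aₙ)ₙ be an increasing sequence of measurable subsets of a probability space (X,μ), let ε > 0, and for each n let Bₙ ⊆ Aₙ satisfy μ(Aₙ \ Bₙ) ≤ (1/ε)·(μ(Aₙ₊₁) − μ(Aₙ)). Set Cₙ := ⋂_{k ≥ n} Bₖ. Then μ(⋃ₙ Cₙ) = μ(⋃ₙ Aₙ). -/
open MeasureTheory Filter Set

/-! The losses `μ(Aₙ \ Bₙ)` are dominated by the increments of the bounded sequence `μ(Aₙ)`, so
they are summable, and by Borel–Cantelli almost every point lies in only finitely many of the sets
`Aₙ \ Bₙ`. A point of `⋃ₙ Aₙ` with this property lies in `Aₖ`, hence in `Bₖ`, for all large `k`. -/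

lemma ENNReal.sum_range_tsub_le {a : ℕ → ENNReal} (ha : Monotone a) (n : ℕ) :
    ∑ k ∈ Finset.range n, (a (k + 1) - a k) ≤ a n := by
  induction n with
  | zero => simp
  | succ n ih =>
    calc ∑ k ∈ Finset.range (n + 1), (a (k + 1) - a k)
        = ∑ k ∈ Finset.range n, (a (k + 1) - a k) + (a (n + 1) - a n) :=
          Finset.sum_range_succ _ _
      _ ≤ a n + (a (n + 1) - a n) := by gcongr
      _ = a (n + 1) := add_tsub_cancel_of_le (ha n.le_succ)

lemma ENNReal.tsum_tsub_le_iSup {a : ℕ → ENNReal} (ha : Monotone a) :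
    ∑' k, (a (k + 1) - a k) ≤ ⨆ k, a k :=
  ENNReal.tsum_le_of_sum_range_le fun n =>
    (ENNReal.sum_range_tsub_le ha n).trans (le_iSup a n)

lemma MeasureTheory.iUnion_ae_le_iUnion_iInter_of_tsum_measure_diff_ne_top {X : Type*}
    [MeasurableSpace X] {μ : Measure X} {A B : ℕ → Set X} (hA : Monotone A)
    (hsum : ∑' n, μ (A n \ B n) ≠ ⊤) :
    (⋃ n, A n : Set X) ≤ᵐ[μ] (⋃ n, ⋂ k, ⋂ (_ : n ≤ k), B k : Set X) := by
  filter_upwards [ae_eventually_notMem hsum] with x hx hxA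
  obtain ⟨n, hxn⟩ := mem_iUnion.1 hxA
  obtain ⟨m, hm⟩ := eventually_atTop.1 hx
  refine mem_iUnion.2 ⟨max n m, mem_iInter₂.2 fun k hk => ?_⟩
  by_contra hxB
  exact hm k (le_of_max_le_right hk) ⟨hA (le_of_max_le_left hk) hxn, hxB⟩

theorem measure_iUnion_iInter_eq_general
    (X : Type*) [MeasurableSpace X] (μ : Measure X) [IsProbabilityMeasure μ]
    (ε : ℝ)
    (A B : ℕ → Set X)
    (hmono : ∀ n, A n ⊆ A (n + 1))
    (hBA : ∀ n, B n ⊆ A n)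
    (hsmall : ∀ n, μ (A n \ B n) ≤ ENNReal.ofReal (1 / ε) * (μ (A (n + 1)) - μ (A n))) :
    μ (⋃ n, ⋂ k, ⋂ (_ : n ≤ k), B k) = μ (⋃ n, A n) := by
  have hA : Monotone A := monotone_nat_of_le_succ hmono
  have hsum : ∑' n, μ (A n \ B n) ≠ ⊤ := by
    apply ne_of_lt
    calc ∑' n, μ (A n \ B n)
        ≤ ∑' n, ENNReal.ofReal (1 / ε) * (μ (A (n + 1)) - μ (A n)) := ENNReal.tsum_le_tsum hsmall
      _ = ENNReal.ofReal (1 / ε) * ∑' n, (μ (A (n + 1)) - μ (A n)) := ENNReal.tsum_mul_left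
      _ ≤ ENNReal.ofReal (1 / ε) * ⨆ n, μ (A n) := by
        gcongr; exact ENNReal.tsum_tsub_le_iSup fun _ _ h => measure_mono (hA h)
      _ ≤ ENNReal.ofReal (1 / ε) * 1 := by gcongr; exact iSup_le fun _ => prob_le_one
      _ < ⊤ := ENNReal.mul_lt_top ENNReal.ofReal_lt_top ENNReal.one_lt_top
  refine le_antisymm (measure_mono ?_) (measure_mono_ae ?_)
  · exact iUnion_mono fun n x hx => hBA n (mem_iInter₂.1 hx n le_rfl)
  · exact iUnion_ae_le_iUnion_iInter_of_tsum_measure_diff_ne_top hA hsum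

/-- If `(Aₙ)` is an increasing sequence of measurable sets, `Bₙ ⊆ Aₙ`, and
`μ(Aₙ \ Bₙ) ≤ (1/ε)(μ(Aₙ₊₁) - μ(Aₙ))`, then with `Cₙ := ⋂_{k ≥ n} Bₖ` we have
`μ(⋃ₙ Cₙ) = μ(⋃ₙ Aₙ)`. -/
theorem measure_iUnion_iInter_eq
    (X : Type*) [MeasurableSpace X] (μ : Measure X) [IsProbabilityMeasure μ]
    (ε : ℝ) (hε : 0 < ε)
    (A B : ℕ → Set X)
    (hAmeas : ∀ n, MeasurableSet (A n)) (hBmeas : ∀ n, MeasurableSet (B n))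
    (hmono : ∀ n, A n ⊆ A (n + 1))
    (hBA : ∀ n, B n ⊆ A n)
    (hsmall : ∀ n, μ (A n \ B n) ≤ ENNReal.ofReal (1 / ε) * (μ (A (n + 1)) - μ (A n))) :
    μ (⋃ n, ⋂ k, ⋂ (_ : n ≤ k), B k) = μ (⋃ n, A n) :=
  measure_iUnion_iInter_eq_general X μ ε A B hmono hBA hsmall
end

section
/- The Bernoulli shift action of the infinite symmetric group S_∞ on ([0,1]^ℕ, λ^⊗ℕ) is suitable: for all Borel sets A, B of positive measure, either for every open neighborhood O of the identity there is g ∈ O with μ(A ∩ gB) > 0, or there exist full-measure subsets A' ⊆ A, B' ⊆ B and a neighborhood O of the identity with (O·A') ∩ B' = ∅. -/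
open MeasureTheory

/-- The Polish topology of pointwise convergence on the infinite symmetric group `S_∞`,
induced by the embedding `g ↦ (g, g⁻¹)` into `(ℕ → ℕ) × (ℕ → ℕ)`. -/
noncomputable instance permTopology : TopologicalSpace (Equiv.Perm ℕ) :=
  TopologicalSpace.induced
    (fun g : Equiv.Perm ℕ => ((g : ℕ → ℕ), (g.symm : ℕ → ℕ))) inferInstance

/-- The Bernoulli shift of `S_∞` on `[0,1]^ℕ`. -/
noncomputable def bernoulliShift (g : Equiv.Perm ℕ) (x : ℕ → ℝ) : ℕ → ℝ :=
  fun n => x (g.symm n)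

open ProbabilityTheory Filter Topology
open scoped ENNReal symmDiff

/-!
Write `μ = ν^ℕ` and cut `x : ℕ → α` into its first `M` coordinates `y` and its tail `z`, shifted
back to start at `0`; this identifies `μ` with `μ ⊗ μ`, and a set `A` with the family of its
sections `A_y`, of measures `f_A y`. A permutation fixing `0, …, M - 1` only moves the tail.
If `∫ f_A f_B dμ = 0` for some `M`, then `A` lives on `{f_A ≠ 0}` and `B` on `{f_A = 0}`, a set
that only depends on the first `M` coordinates and is therefore invariant under the stabiliser
`O_M`. Otherwise, fix `M`: i.i.d. products are mixing along permutations that push every finite set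
off itself, so by dominated convergence there are `g_n ∈ O_M` with
`μ(A ∩ g_n B) → ∫ f_A f_B dμ > 0`; and every neighbourhood of the identity contains some `O_M`.
-/

section Mixing

variable {ι α : Type*} [MeasurableSpace α] {ν : Measure α} [IsProbabilityMeasure ν]

theorem measurePreserving_comp_perm_infinitePi (σ : Equiv.Perm ι) :
    MeasurePreserving (fun x : ι → α ↦ x ∘ σ)
      (Measure.infinitePi fun _ ↦ ν) (Measure.infinitePi fun _ ↦ ν) :=
  ⟨by fun_prop, Measure.map_infinitePi_infinitePi_of_inj σ.injective⟩

theorem infinitePi_cylinder_inter_preimage_comp_perm (σ : Equiv.Perm ι) {s t : Finset ι}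
    (hst : Disjoint s (t.map σ.toEmbedding)) {S : Set (s → α)} {T : Set (t → α)}
    (hS : MeasurableSet S) (hT : MeasurableSet T) :
    Measure.infinitePi (fun _ ↦ ν) (cylinder s S ∩ (· ∘ σ) ⁻¹' cylinder t T) =
      Measure.infinitePi (fun _ ↦ ν) (cylinder s S) *
        Measure.infinitePi (fun _ ↦ ν) (cylinder t T) := by
  have hind := (iIndepFun_infinitePi (P := fun _ : ι ↦ ν) (X := fun _ ↦ id)
    fun _ ↦ measurable_id).indepFun_finset s (t.map σ.toEmbedding) hst fun _ ↦ by fun_prop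
  let reindex : (t.map σ.toEmbedding → α) → (t → α) :=
    fun w i ↦ w ⟨σ i, Finset.mem_map_of_mem _ i.2⟩
  have := IndepFun.measure_inter_preimage_eq_mul
    (hind.comp measurable_id (by fun_prop : Measurable reindex)) S T hS hT
  rw [← (measurePreserving_comp_perm_infinitePi σ).measure_preimage
    (MeasurableSet.cylinder t hT).nullMeasurableSet]
  exact this

theorem exists_cylinder_measureReal_symmDiff_lt {X : ι → Type*} [∀ i, MeasurableSpace (X i)]
    (μ : Measure ((i : ι) → X i)) [IsFiniteMeasure μ] {C : Set ((i : ι) → X i)}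
    (hC : MeasurableSet C) {ε : ℝ} (hε : 0 < ε) :
    ∃ (s : Finset ι) (S : Set ((i : s) → X i)),
      MeasurableSet S ∧ μ.real (cylinder s S ∆ C) < ε := by
  obtain ⟨_, hcyl, hlt⟩ := exists_measure_symmDiff_lt_of_generateFrom_isSetRing (μ := μ)
    isSetRing_measurableCylinders
    ⟨{Set.univ}, Set.countable_singleton _,
      Set.singleton_subset_iff.mpr (univ_mem_measurableCylinders X), by simp⟩
    generateFrom_measurableCylinders.symm hC (ENNReal.ofReal_pos.mpr hε)
  obtain ⟨s, S, hS, rfl⟩ := (mem_measurableCylinders _).mp hcyl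
  exact ⟨s, S, hS, ENNReal.toReal_lt_of_lt_ofReal hlt⟩

theorem abs_mul_sub_mul_le {x y x' y' : ℝ} (hx : |x| ≤ 1) (hy' : |y'| ≤ 1) :
    |x * y - x' * y'| ≤ |x - x'| + |y - y'| :=
  calc |x * y - x' * y'| = |x * (y - y') + (x - x') * y'| := by ring_nf
    _ ≤ |x| * |y - y'| + |x - x'| * |y'| := by
      rw [← abs_mul, ← abs_mul]; exact abs_add_le _ _
    _ ≤ |y - y'| + |x - x'| :=
      add_le_add (mul_le_of_le_one_left (abs_nonneg _) hx)
        (mul_le_of_le_one_right (abs_nonneg _) hy')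
    _ = |x - x'| + |y - y'| := add_comm _ _

theorem abs_measureReal_inter_preimage_sub_le {Ω : Type*} [MeasurableSpace Ω] {μ : Measure Ω}
    [IsFiniteMeasure μ] {f : Ω → Ω} (hf : MeasurePreserving f μ μ) {C C' D D' : Set Ω}
    (hC : MeasurableSet C) (hC' : MeasurableSet C') (hD : MeasurableSet D)
    (hD' : MeasurableSet D') :
    |μ.real (C ∩ f ⁻¹' D) - μ.real (C' ∩ f ⁻¹' D')| ≤ μ.real (C ∆ C') + μ.real (D ∆ D') := by
  refine (abs_measureReal_sub_le_measureReal_symmDiff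
    (hC.inter (hf.measurable hD)).nullMeasurableSet
    (hC'.inter (hf.measurable hD')).nullMeasurableSet).trans ?_
  rw [← hf.measureReal_preimage (hD.symmDiff hD').nullMeasurableSet]
  refine (measureReal_mono fun x hx ↦ ?_).trans (measureReal_union_le _ _)
  simp only [Set.mem_symmDiff, Set.mem_inter_iff, Set.mem_preimage, Set.mem_union] at hx ⊢
  tauto

theorem tendsto_infinitePi_inter_preimage_comp_perm (σ : ℕ → Equiv.Perm ι)
    (hσ : ∀ s : Finset ι, ∀ᶠ n in atTop, Disjoint s (s.map (σ n).toEmbedding))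
    {C D : Set (ι → α)} (hC : MeasurableSet C) (hD : MeasurableSet D) :
    Tendsto (fun n ↦ Measure.infinitePi (fun _ ↦ ν) (C ∩ (· ∘ σ n) ⁻¹' D)) atTop
      (𝓝 (Measure.infinitePi (fun _ ↦ ν) C * Measure.infinitePi (fun _ ↦ ν) D)) := by
  classical
  set μ := Measure.infinitePi fun _ : ι ↦ ν
  suffices Tendsto (fun n ↦ μ.real (C ∩ (· ∘ σ n) ⁻¹' D)) atTop (𝓝 (μ.real C * μ.real D)) by
    simpa [ENNReal.ofReal_mul, ofReal_measureReal] using ENNReal.tendsto_ofReal this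
  refine Metric.tendsto_nhds.mpr fun ε hε ↦ ?_
  -- Cylinders approximating `C` and `D` become independent once `σ n` moves the coordinates of
  -- the second one off those of the first.
  obtain ⟨s, S, hS, hCS⟩ := exists_cylinder_measureReal_symmDiff_lt μ hC (by positivity : 0 < ε / 4)
  obtain ⟨t, T, hT, hDT⟩ := exists_cylinder_measureReal_symmDiff_lt μ hD (by positivity : 0 < ε / 4)
  have hSm : MeasurableSet (cylinder s S) := .cylinder (α := fun _ ↦ α) s hS
  have hTm : MeasurableSet (cylinder t T) := .cylinder (α := fun _ ↦ α) t hT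
  have hμ1 : ∀ E, |μ.real E| ≤ 1 := fun E ↦ by
    rw [abs_of_nonneg measureReal_nonneg]; exact measureReal_le_one
  have hC' := abs_measureReal_sub_le_measureReal_symmDiff hSm.nullMeasurableSet
    hC.nullMeasurableSet (μ := μ)
  have hD' := abs_measureReal_sub_le_measureReal_symmDiff hTm.nullMeasurableSet
    hD.nullMeasurableSet (μ := μ)
  have hmul := abs_mul_sub_mul_le (y := μ.real (cylinder t T)) (x' := μ.real C)
    (hμ1 (cylinder s S)) (hμ1 D)
  filter_upwards [hσ (s ∪ t)] with n hn
  have hst : Disjoint s (t.map (σ n).toEmbedding) :=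
    (hn.mono_left Finset.subset_union_left).mono_right
      (Finset.map_subset_map.mpr Finset.subset_union_right)
  have hindep : μ.real (cylinder s S ∩ (· ∘ σ n) ⁻¹' cylinder t T) =
      μ.real (cylinder s S) * μ.real (cylinder t T) := by
    simp only [measureReal_def, ← ENNReal.toReal_mul]
    exact congrArg ENNReal.toReal (infinitePi_cylinder_inter_preimage_comp_perm (σ n) hst hS hT)
  have happrox := abs_measureReal_inter_preimage_sub_le
    (measurePreserving_comp_perm_infinitePi (ν := ν) (σ n)) hSm hC hTm hD
  rw [hindep, abs_sub_comm] at happrox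
  rw [Real.dist_eq]
  calc _ ≤ _ := abs_sub_le _ (μ.real (cylinder s S) * μ.real (cylinder t T)) _
    _ < ε := by linarith

end Mixing

def shiftPerm (M : ℕ) (τ : Equiv.Perm ℕ) : Equiv.Perm ℕ where
  toFun i := if i < M then i else τ (i - M) + M
  invFun i := if i < M then i else τ.symm (i - M) + M
  left_inv i := by by_cases hi : i < M <;> simp [hi]; omega
  right_inv i := by by_cases hi : i < M <;> simp [hi]; omega

theorem shiftPerm_apply_of_lt {M i : ℕ} (τ : Equiv.Perm ℕ) (hi : i < M) : shiftPerm M τ i = i :=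
  if_pos hi

theorem shiftPerm_mem_fixingSubgroup (M : ℕ) (τ : Equiv.Perm ℕ) :
    shiftPerm M τ ∈ fixingSubgroup (Equiv.Perm ℕ) (Set.Iio M) :=
  (mem_fixingSubgroup_iff _).mpr fun _ hi ↦ shiftPerm_apply_of_lt τ hi

def blockSwap (n : ℕ) : Equiv.Perm ℕ :=
  Function.Involutive.toPerm (fun i ↦ if i < n then i + n else if i < 2 * n then i - n else i)
    fun i ↦ by dsimp only; split_ifs <;> omega

theorem blockSwap_apply_of_lt {n i : ℕ} (hi : i < n) : blockSwap n i = i + n :=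
  if_pos hi

theorem eventually_disjoint_map_blockSwap (s : Finset ℕ) :
    ∀ᶠ n in atTop, Disjoint s (s.map (blockSwap n).toEmbedding) := by
  filter_upwards [eventually_gt_atTop (s.sup id)] with n hn
  refine Finset.disjoint_left.mpr fun i hi hi' ↦ ?_
  obtain ⟨j, hj, rfl⟩ := Finset.mem_map.mp hi'
  have hjn : j < n := (Finset.le_sup (f := id) hj).trans_lt hn
  have hin : (blockSwap n).toEmbedding j < n := (Finset.le_sup (f := id) hi).trans_lt hn
  rw [Equiv.coe_toEmbedding, blockSwap_apply_of_lt hjn] at hin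
  omega

section JoinAt

variable {α : Type*}

def joinAt (M : ℕ) (y z : ℕ → α) : ℕ → α := fun i ↦ if i < M then y i else z (i - M)

theorem joinAt_comp_shiftPerm (M : ℕ) (τ : Equiv.Perm ℕ) (y z : ℕ → α) :
    joinAt M y z ∘ shiftPerm M τ = joinAt M y (z ∘ τ) := by
  ext i
  by_cases hi : i < M <;> simp [joinAt, shiftPerm, hi]

theorem joinAt_comp_of_forall_lt {M : ℕ} {g : ℕ → ℕ} (hg : ∀ i < M, g i = i) (x : ℕ → α) :
    joinAt M (x ∘ g) = joinAt M x := by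
  ext z i
  by_cases hi : i < M <;> simp [joinAt, hi, hg]

theorem joinAt_joinAt (M : ℕ) (y z : ℕ → α) : joinAt M (joinAt M y z) = joinAt M y := by
  ext w i
  by_cases hi : i < M <;> simp [joinAt, hi]

theorem preimage_joinAt_pi (M : ℕ) (s : Finset ℕ) (t : ℕ → Set α) :
    (fun p : (ℕ → α) × (ℕ → α) ↦ joinAt M p.1 p.2) ⁻¹' Set.pi s t =
      Set.pi ↑(s.filter (· < M)) t ×ˢ
        Set.pi ↑((s.filter (¬ · < M)).image (· - M)) (fun j ↦ t (j + M)) := by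
  ext ⟨y, z⟩
  simp only [Set.mem_preimage, Set.mem_pi, Set.mem_prod, Finset.coe_filter, Finset.coe_image,
    Set.mem_ofPred_eq, Set.mem_image, joinAt]
  constructor
  · intro h
    refine ⟨fun i ⟨hs, hi⟩ ↦ by simpa [hi] using h i hs, ?_⟩
    rintro _ ⟨i, ⟨hs, hi⟩, rfl⟩
    simpa [hi, Nat.sub_add_cancel (not_lt.mp hi)] using h i hs
  · rintro ⟨h₁, h₂⟩ i hs
    by_cases hi : i < M
    · simpa [hi] using h₁ i ⟨hs, hi⟩
    · simpa [hi, Nat.sub_add_cancel (not_lt.mp hi)] using h₂ _ ⟨i, ⟨hs, hi⟩, rfl⟩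

end JoinAt

section Fiber

variable {α : Type*} [MeasurableSpace α] {ν : Measure α} [IsProbabilityMeasure ν]

theorem measurable_joinAt (M : ℕ) :
    Measurable (fun p : (ℕ → α) × (ℕ → α) ↦ joinAt M p.1 p.2) := by
  refine measurable_pi_lambda _ fun i ↦ ?_
  by_cases hi : i < M <;> simp only [joinAt, hi, if_true, if_false] <;> fun_prop

theorem measurePreserving_joinAt (M : ℕ) :
    MeasurePreserving (fun p : (ℕ → α) × (ℕ → α) ↦ joinAt M p.1 p.2)
      ((Measure.infinitePi fun _ ↦ ν).prod (Measure.infinitePi fun _ ↦ ν))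
      (Measure.infinitePi fun _ ↦ ν) := by
  refine ⟨measurable_joinAt M, Measure.eq_infinitePi _ fun s t ht ↦ ?_⟩
  rw [Measure.map_apply (measurable_joinAt M) (.pi s.countable_toSet fun i _ ↦ ht i),
    preimage_joinAt_pi, Measure.prod_prod, Measure.infinitePi_pi _ fun i _ ↦ ht i,
    Measure.infinitePi_pi _ fun i _ ↦ ht _, Finset.prod_image fun i hi j hj hij ↦ by
      simp only [Finset.coe_filter, Set.mem_ofPred_eq] at hi hj hij; omega,
    ← Finset.prod_filter_mul_prod_filter_not s (· < M)]
  congr 1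
  exact Finset.prod_congr rfl fun i hi ↦ by
    rw [Nat.sub_add_cancel (not_lt.mp (Finset.mem_filter.mp hi).2)]

/-- The measure of `A` under the ergodic component `δ_y ⊗ ν^{[M, ∞)}` of the stabiliser of
`0, …, M - 1` (only `y` below `M` matters). -/
noncomputable def fiberMeasure (ν : Measure α) (M : ℕ) (A : Set (ℕ → α)) (y : ℕ → α) : ℝ≥0∞ :=
  Measure.infinitePi (fun _ ↦ ν) (joinAt M y ⁻¹' A)

theorem measurable_fiberMeasure (M : ℕ) {A : Set (ℕ → α)} (hA : MeasurableSet A) :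
    Measurable (fiberMeasure ν M A) :=
  measurable_measure_prodMk_left (measurable_joinAt M hA)

theorem lintegral_fiberMeasure (M : ℕ) {A : Set (ℕ → α)} (hA : MeasurableSet A) :
    ∫⁻ y, fiberMeasure ν M A y ∂(Measure.infinitePi fun _ ↦ ν) =
      Measure.infinitePi (fun _ ↦ ν) A := by
  rw [← (measurePreserving_joinAt M).measure_preimage hA.nullMeasurableSet,
    Measure.prod_apply (measurable_joinAt M hA)]
  rfl

theorem measure_inter_eq_setLIntegral_fiberMeasure (M : ℕ) {A E : Set (ℕ → α)}
    (hA : MeasurableSet A) (hE : MeasurableSet E) (hEM : ∀ y z, joinAt M y z ∈ E ↔ y ∈ E) :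
    Measure.infinitePi (fun _ ↦ ν) (A ∩ E) =
      ∫⁻ y in E, fiberMeasure ν M A y ∂(Measure.infinitePi fun _ ↦ ν) := by
  rw [← lintegral_fiberMeasure M (hA.inter hE), ← lintegral_indicator hE]
  congr with y
  by_cases hy : y ∈ E <;> simp [fiberMeasure, Set.preimage, hEM, hy]

theorem tendsto_measure_inter_preimage_comp_shiftPerm (M : ℕ) (τ : ℕ → Equiv.Perm ℕ)
    (hτ : ∀ s : Finset ℕ, ∀ᶠ n in atTop, Disjoint s (s.map (τ n).toEmbedding))
    {A B : Set (ℕ → α)} (hA : MeasurableSet A) (hB : MeasurableSet B) :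
    Tendsto (fun n ↦ Measure.infinitePi (fun _ ↦ ν) (A ∩ (· ∘ shiftPerm M (τ n)) ⁻¹' B)) atTop
      (𝓝 (∫⁻ y, fiberMeasure ν M A y * fiberMeasure ν M B y
        ∂(Measure.infinitePi fun _ ↦ ν))) := by
  have hfiber : ∀ n y, fiberMeasure ν M (A ∩ (· ∘ shiftPerm M (τ n)) ⁻¹' B) y =
      Measure.infinitePi (fun _ ↦ ν)
        (joinAt M y ⁻¹' A ∩ (· ∘ τ n) ⁻¹' (joinAt M y ⁻¹' B)) := fun n y ↦ by
    simp only [fiberMeasure, Set.preimage_inter]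
    congr 2
    ext z
    simp [joinAt_comp_shiftPerm]
  have hmeas : ∀ n, MeasurableSet (A ∩ (· ∘ shiftPerm M (τ n)) ⁻¹' B) :=
    fun n ↦ hA.inter (hB.preimage (by fun_prop))
  simp_rw [← lintegral_fiberMeasure M (hmeas _), hfiber]
  refine tendsto_lintegral_of_dominated_convergence 1 (fun n ↦ ?_) (fun n ↦ ?_) (by simp) ?_
  · simpa only [← hfiber] using measurable_fiberMeasure M (hmeas n)
  · exact .of_forall fun y ↦ prob_le_one
  · exact .of_forall fun y ↦ tendsto_infinitePi_inter_preimage_comp_perm τ hτ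
      (measurable_joinAt M |>.comp measurable_prodMk_left hA)
      (measurable_joinAt M |>.comp measurable_prodMk_left hB)

theorem exists_separated_of_lintegral_fiberMeasure_mul_eq_zero (M : ℕ) {A B : Set (ℕ → α)}
    (hA : MeasurableSet A) (hB : MeasurableSet B)
    (h : ∫⁻ y, fiberMeasure ν M A y * fiberMeasure ν M B y ∂(Measure.infinitePi fun _ ↦ ν) = 0) :
    ∃ A' ⊆ A, ∃ B' ⊆ B, Measure.infinitePi (fun _ ↦ ν) (A \ A') = 0 ∧
      Measure.infinitePi (fun _ ↦ ν) (B \ B') = 0 ∧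
      (⋃ g ∈ (fixingSubgroup (Equiv.Perm ℕ) (Set.Iio M) : Set (Equiv.Perm ℕ)),
        (· ∘ ⇑g) ⁻¹' A') ∩ B' = ∅ := by
  set E := {x | fiberMeasure ν M A x = 0}
  have hEm : MeasurableSet E := measurable_fiberMeasure M hA (measurableSet_singleton 0)
  have hEM : ∀ y z, joinAt M y z ∈ E ↔ y ∈ E := fun y z ↦ by
    simp [E, fiberMeasure, joinAt_joinAt]
  refine ⟨A \ E, Set.sdiff_subset, B ∩ E, Set.inter_subset_left, ?_, ?_, ?_⟩
  · rw [Set.sdiff_sdiff_right_self, measure_inter_eq_setLIntegral_fiberMeasure M hA hEm hEM]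
    exact setLIntegral_eq_zero_iff hEm (measurable_fiberMeasure M hA) |>.mpr
      (.of_forall fun _ ↦ id)
  · rw [Set.sdiff_self_inter, Set.sdiff_eq,
      measure_inter_eq_setLIntegral_fiberMeasure M hB hEm.compl fun y z ↦ (hEM y z).not]
    refine setLIntegral_eq_zero_iff hEm.compl (measurable_fiberMeasure M hB) |>.mpr ?_
    filter_upwards [(lintegral_eq_zero_iff ((measurable_fiberMeasure M hA).mul
      (measurable_fiberMeasure M hB))).mp h] with y hy hyE
    exact (mul_eq_zero.mp hy).resolve_left hyE
  · refine Set.eq_empty_of_forall_notMem fun x ⟨hx, hxB⟩ ↦ ?_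
    obtain ⟨g, hg, hxA⟩ := Set.mem_iUnion₂.mp hx
    have hfix : ∀ i < M, g i = i := fun i hi ↦ (mem_fixingSubgroup_iff _).mp hg i hi
    exact hxA.2 (by simpa [E, fiberMeasure, joinAt_comp_of_forall_lt hfix] using hxB.2)

end Fiber

theorem isOpen_fixingSubgroup_Iio (M : ℕ) :
    IsOpen (fixingSubgroup (Equiv.Perm ℕ) (Set.Iio M) : Set (Equiv.Perm ℕ)) := by
  have : (fixingSubgroup (Equiv.Perm ℕ) (Set.Iio M) : Set (Equiv.Perm ℕ)) =
      (fun g : Equiv.Perm ℕ ↦ ((g : ℕ → ℕ), (g.symm : ℕ → ℕ))) ⁻¹'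
        ((Set.Iio M).pi (fun i ↦ {i}) ×ˢ Set.univ) := by
    ext g
    simp [mem_fixingSubgroup_iff]
  rw [this]
  exact isOpen_induced ((isOpen_set_pi (Set.finite_Iio M) fun _ _ ↦ isOpen_discrete _).prod
    isOpen_univ)

theorem exists_forall_lt_eq_subset_of_mem_nhds {f : ℕ → ℕ} {t : Set (ℕ → ℕ)} (ht : t ∈ 𝓝 f) :
    ∃ M, {g | ∀ i < M, g i = f i} ⊆ t := by
  obtain ⟨I, hI, u, hu, hIu⟩ := Filter.mem_pi.mp (by rwa [nhds_pi] at ht)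
  obtain ⟨M, hM⟩ := hI.bddAbove
  refine ⟨M + 1, fun g hg ↦ hIu fun i hi ↦ ?_⟩
  rw [hg i (Nat.lt_succ_of_le (hM hi))]
  exact mem_of_mem_nhds (hu i)

theorem exists_fixingSubgroup_Iio_subset {O : Set (Equiv.Perm ℕ)}
    (hO : O ∈ 𝓝 (1 : Equiv.Perm ℕ)) :
    ∃ M : ℕ, (fixingSubgroup (Equiv.Perm ℕ) (Set.Iio M) : Set (Equiv.Perm ℕ)) ⊆ O := by
  rw [nhds_induced, Filter.mem_comap] at hO
  obtain ⟨U, hU, hUO⟩ := hO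
  rw [nhds_prod_eq, Filter.mem_prod_iff] at hU
  obtain ⟨t₁, ht₁, t₂, ht₂, ht⟩ := hU
  obtain ⟨M₁, hM₁⟩ := exists_forall_lt_eq_subset_of_mem_nhds ht₁
  obtain ⟨M₂, hM₂⟩ := exists_forall_lt_eq_subset_of_mem_nhds ht₂
  refine ⟨max M₁ M₂, fun g hg ↦ hUO (ht ⟨hM₁ fun i hi ↦ ?_, hM₂ fun i hi ↦ ?_⟩)⟩
  · exact (mem_fixingSubgroup_iff _).mp hg i (lt_max_of_lt_left hi)
  · exact (mem_fixingSubgroup_iff _).mp (inv_mem hg) i (lt_max_of_lt_right hi)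

theorem image_bernoulliShift (g : Equiv.Perm ℕ) (B : Set (ℕ → ℝ)) :
    bernoulliShift g '' B = (· ∘ ⇑g) ⁻¹' B := by
  ext x
  constructor
  · rintro ⟨b, hb, rfl⟩
    simpa [bernoulliShift, Function.comp_def] using hb
  · exact fun hx ↦ ⟨x ∘ g, hx, by ext; simp [bernoulliShift]⟩

theorem bernoulli_shift_suitable_general
    (μ : Measure (ℕ → ℝ))
    (hμ : ∀ (s : Finset ℕ) (f : ℕ → Set ℝ), (∀ i, MeasurableSet (f i)) →
      μ {x | ∀ i ∈ s, x i ∈ f i}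
        = ∏ i ∈ s, (MeasureTheory.volume.restrict (Set.Icc (0:ℝ) 1)) (f i)) :
    ∀ A B : Set (ℕ → ℝ), MeasurableSet A → MeasurableSet B → 0 < μ A → 0 < μ B →
      (∀ O : Set (Equiv.Perm ℕ), IsOpen O → (1 : Equiv.Perm ℕ) ∈ O →
        ∃ g ∈ O, 0 < μ (A ∩ bernoulliShift g '' B)) ∨
      (∃ A' ⊆ A, ∃ B' ⊆ B, μ (A \ A') = 0 ∧ μ (B \ B') = 0 ∧
        ∃ O : Set (Equiv.Perm ℕ), IsOpen O ∧ (1 : Equiv.Perm ℕ) ∈ O ∧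
          (⋃ g ∈ O, bernoulliShift g '' A') ∩ B' = ∅) := by
  intro A B hA hB _ _
  set ν : Measure ℝ := volume.restrict (Set.Icc 0 1)
  have : IsProbabilityMeasure ν := ⟨by simp [ν, Real.volume_Icc]⟩
  obtain rfl := Measure.eq_infinitePi (fun _ ↦ ν) hμ
  simp_rw [image_bernoulliShift]
  by_cases hsep : ∃ M, ∫⁻ y, fiberMeasure ν M A y * fiberMeasure ν M B y
    ∂(Measure.infinitePi fun _ ↦ ν) = 0
  · right
    obtain ⟨M, hM⟩ := hsep
    obtain ⟨A', hA', B', hB', hAA', hBB', hO⟩ :=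
      exists_separated_of_lintegral_fiberMeasure_mul_eq_zero M hA hB hM
    exact ⟨A', hA', B', hB', hAA', hBB', _, isOpen_fixingSubgroup_Iio M, one_mem _, hO⟩
  · left
    push Not at hsep
    intro O hO h1
    obtain ⟨M, hM⟩ := exists_fixingSubgroup_Iio_subset (hO.mem_nhds h1)
    obtain ⟨n, hn⟩ := (tendsto_measure_inter_preimage_comp_shiftPerm M blockSwap
      eventually_disjoint_map_blockSwap hA hB |>.eventually_const_lt
        (pos_iff_ne_zero.mpr (hsep M))).exists
    exact ⟨_, hM (shiftPerm_mem_fixingSubgroup M (blockSwap n)), hn⟩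

/-- The Bernoulli shift action of `S_∞` on `([0,1]^ℕ, λ^⊗ℕ)` is suitable: for all Borel
sets `A, B` of positive measure, either every open neighborhood of the identity contains
some `g` with `μ(A ∩ g·B) > 0`, or there are full-measure subsets `A' ⊆ A`, `B' ⊆ B` and
a neighborhood `O` of the identity with `(O·A') ∩ B' = ∅`. -/
theorem bernoulli_shift_suitable
    (μ : Measure (ℕ → ℝ)) [IsProbabilityMeasure μ]
    (hμ : ∀ (s : Finset ℕ) (f : ℕ → Set ℝ), (∀ i, MeasurableSet (f i)) →
      μ {x | ∀ i ∈ s, x i ∈ f i}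
        = ∏ i ∈ s, (MeasureTheory.volume.restrict (Set.Icc (0:ℝ) 1)) (f i)) :
    ∀ A B : Set (ℕ → ℝ), MeasurableSet A → MeasurableSet B → 0 < μ A → 0 < μ B →
      (∀ O : Set (Equiv.Perm ℕ), IsOpen O → (1 : Equiv.Perm ℕ) ∈ O →
        ∃ g ∈ O, 0 < μ (A ∩ bernoulliShift g '' B)) ∨
      (∃ A' ⊆ A, ∃ B' ⊆ B, μ (A \ A') = 0 ∧ μ (B \ B') = 0 ∧
        ∃ O : Set (Equiv.Perm ℕ), IsOpen O ∧ (1 : Equiv.Perm ℕ) ∈ O ∧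
          (⋃ g ∈ O, bernoulliShift g '' A') ∩ B' = ∅) :=
  bernoulli_shift_suitable_general μ hμ
end

section
/- Let G be a locally compact Polish group acting essentially freely and measure-preservingly on (X,μ), let Y ⊆ X be a cross-section with injectivity neighborhood U, and suppose A := U·Y has μ(A) = 1/K for some integer K ≥ 1. If the action is ergodic, then there exists T ∈ [R_G] of order K such that {A, T(A), ..., T^{K−1}(A)} partitions a full-measure subset of X. -/
/-!
An ergodic full group acts transitively, up to null sets, on measurable sets of equal measure.
If `μ B ≤ μ C`, a greedy exhaustion moves almost all of `B` into `C` by a countable piecewise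
translation: each step translates, by one group element, at least half of what any single
translate could move of the remainder of `B` into the remainder of `C`. The measures of the pieces
are summable, so no translate of the leftover of `C` meets the leftover of `B`, which is the
smaller of the two. Such a pair has a null member: `x ↦ haar {g | g⁻¹ • x ∈ C}` is `G`-invariant,
hence a.e. positive by ergodicity when `μ C ≠ 0`, while by Fubini it vanishes a.e. on a set that
no translate of `C` meets.

Starting from `A` with `K * μ A = 1`, this produces `K - 1` translates of almost all of `A`,
pairwise disjoint and disjoint from `A`. The involutions `τⱼ` exchanging almost all of `A` with
the `j`-th translate lie in the full group, and their product `τ_{K-1} ⋯ τ₁` cycles the `K` copies.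
-/
open MeasureTheory Pointwise
open scoped ENNReal
open Set Function

lemma exists_iSup_le_two_mul {ι : Type*} [Nonempty ι] (f : ι → ℝ≥0∞) (hf : ⨆ i, f i ≠ ⊤) :
    ∃ i, ⨆ j, f j ≤ 2 * f i := by
  rcases eq_or_ne (⨆ i, f i) 0 with h0 | h0
  · exact ⟨Classical.arbitrary ι, by simp [h0]⟩
  obtain ⟨i, hi⟩ := lt_iSup_iff.1 (ENNReal.half_lt_self h0 hf)
  refine ⟨i, ?_⟩
  calc ⨆ j, f j = 2 * ((⨆ j, f j) / 2) :=
        (ENNReal.mul_div_cancel two_ne_zero ENNReal.ofNat_ne_top).symm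
    _ ≤ 2 * f i := by gcongr

/-- An element of the pseudo full group `[[R_G]]`, presented as countably many disjoint pieces,
`piece n` being translated by `elem n`. -/
structure PiecewiseTranslation (G X : Type*) [SMul G X] [MeasurableSpace X] where
  piece : ℕ → Set X
  elem : ℕ → G
  measurableSet_piece : ∀ n, MeasurableSet (piece n)
  pairwise_disjoint_piece : Pairwise (Disjoint on piece)
  pairwise_disjoint_smul_piece : Pairwise (Disjoint on fun n => elem n • piece n)

namespace PiecewiseTranslation

variable {G X : Type*} [Group G] [MulAction G X] [MeasurableSpace X]
  (Φ : PiecewiseTranslation G X) {x y : X} {n : ℕ}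

instance : Inhabited (PiecewiseTranslation G X) :=
  ⟨⟨fun _ => ∅, fun _ => 1, fun _ => .empty, fun _ _ _ => disjoint_bot_left,
    fun _ _ _ => by simp [onFun]⟩⟩

def dom : Set X := ⋃ n, Φ.piece n

def ran : Set X := ⋃ n, Φ.elem n • Φ.piece n

open Classical in
noncomputable def toFun (x : X) : X :=
  if h : ∃ n, x ∈ Φ.piece n then Φ.elem h.choose • x else x

noncomputable instance : CoeFun (PiecewiseTranslation G X) fun _ => X → X := ⟨toFun⟩

lemma apply_of_mem_piece (hx : x ∈ Φ.piece n) : Φ x = Φ.elem n • x := by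
  have h : ∃ m, x ∈ Φ.piece m := ⟨n, hx⟩
  have hn : h.choose = n := Φ.pairwise_disjoint_piece.eq (not_disjoint_iff.2 ⟨x, h.choose_spec, hx⟩)
  simp only [toFun, dif_pos h, hn]

lemma apply_of_notMem_dom (hx : x ∉ Φ.dom) : Φ x = x := by
  have h : ¬ ∃ n, x ∈ Φ.piece n := by simpa [dom] using hx
  simp only [toFun, dif_neg h]

lemma exists_apply_eq_smul (x : X) : ∃ g : G, Φ x = g • x := by
  by_cases hx : x ∈ Φ.dom
  · obtain ⟨n, hn⟩ := mem_iUnion.1 hx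
    exact ⟨Φ.elem n, Φ.apply_of_mem_piece hn⟩
  · exact ⟨1, by rw [Φ.apply_of_notMem_dom hx, one_smul]⟩

lemma image_piece (n : ℕ) : Φ '' Φ.piece n = Φ.elem n • Φ.piece n := by
  rw [← image_smul]
  exact image_congr fun x hx => Φ.apply_of_mem_piece hx

lemma image_dom : Φ '' Φ.dom = Φ.ran := by
  simp only [dom, ran, image_iUnion, image_piece]

lemma mapsTo_dom_ran : MapsTo Φ Φ.dom Φ.ran := fun _ hx => Φ.image_dom ▸ mem_image_of_mem Φ hx

lemma measurableSet_dom : MeasurableSet Φ.dom := MeasurableSet.iUnion Φ.measurableSet_piece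

lemma dom_inter_preimage (s : Set X) :
    Φ.dom ∩ Φ ⁻¹' s = ⋃ n, Φ.piece n ∩ (Φ.elem n • ·) ⁻¹' s := by
  rw [dom, iUnion_inter]
  refine iUnion_congr fun n => ext fun x => and_congr_right fun hx => ?_
  rw [mem_preimage, Φ.apply_of_mem_piece hx, mem_preimage]

def restrict (s : Set X) (hs : MeasurableSet s) : PiecewiseTranslation G X where
  piece n := Φ.piece n ∩ s
  elem := Φ.elem
  measurableSet_piece n := (Φ.measurableSet_piece n).inter hs
  pairwise_disjoint_piece _ _ h :=
    (Φ.pairwise_disjoint_piece h).mono inter_subset_left inter_subset_left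
  pairwise_disjoint_smul_piece _ _ h := (Φ.pairwise_disjoint_smul_piece h).mono
    (smul_set_mono inter_subset_left) (smul_set_mono inter_subset_left)

lemma dom_restrict {s : Set X} (hs : MeasurableSet s) : (Φ.restrict s hs).dom = Φ.dom ∩ s := by
  simp only [dom, restrict, iUnion_inter]

lemma ran_restrict_subset {s : Set X} (hs : MeasurableSet s) : (Φ.restrict s hs).ran ⊆ Φ.ran :=
  iUnion_mono fun _ => smul_set_mono inter_subset_left

variable [MeasurableConstSMul G X]

lemma measurableSet_ran : MeasurableSet Φ.ran :=
  MeasurableSet.iUnion fun n => (Φ.measurableSet_piece n).const_smul _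

lemma measurable : Measurable Φ := by
  intro s hs
  have hdecomp : Φ ⁻¹' s = (Φ.domᶜ ∩ s) ∪ (Φ.dom ∩ Φ ⁻¹' s) := by
    ext x
    by_cases hx : x ∈ Φ.dom <;> simp [hx, Φ.apply_of_notMem_dom]
  rw [hdecomp, dom_inter_preimage]
  exact (Φ.measurableSet_dom.compl.inter hs).union <| .iUnion fun n =>
    (Φ.measurableSet_piece n).inter (measurable_const_smul _ hs)

lemma measure_dom_inter_preimage {μ : Measure X} [SMulInvariantMeasure G X μ] {s : Set X}
    (hs : MeasurableSet s) : μ (Φ.dom ∩ Φ ⁻¹' s) = μ (Φ.ran ∩ s) := by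
  have hpiece : ∀ n, Φ.elem n • (Φ.piece n ∩ (Φ.elem n • ·) ⁻¹' s) = Φ.elem n • Φ.piece n ∩ s :=
    fun n => by rw [smul_set_inter, preimage_smul, smul_inv_smul]
  have hmeas : ∀ n, MeasurableSet (Φ.piece n ∩ (Φ.elem n • ·) ⁻¹' s) :=
    fun n => (Φ.measurableSet_piece n).inter (measurable_const_smul _ hs)
  rw [dom_inter_preimage, measure_iUnion _ hmeas, ran, iUnion_inter, ← iUnion_congr hpiece,
    measure_iUnion _ fun n => (hmeas n).const_smul _]
  · simp only [measure_smul]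
  · exact fun m n h => (Φ.pairwise_disjoint_smul_piece h).mono
      (smul_set_mono inter_subset_left) (smul_set_mono inter_subset_left)
  · exact fun m n h => (Φ.pairwise_disjoint_piece h).mono inter_subset_left inter_subset_left

lemma measure_ran {μ : Measure X} [SMulInvariantMeasure G X μ] : μ Φ.ran = μ Φ.dom := by
  simpa using (Φ.measure_dom_inter_preimage (μ := μ) MeasurableSet.univ).symm

def inv : PiecewiseTranslation G X where
  piece n := Φ.elem n • Φ.piece n
  elem n := (Φ.elem n)⁻¹
  measurableSet_piece n := (Φ.measurableSet_piece n).const_smul _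
  pairwise_disjoint_piece := Φ.pairwise_disjoint_smul_piece
  pairwise_disjoint_smul_piece _ _ h := by
    simpa only [inv_smul_smul] using Φ.pairwise_disjoint_piece h

lemma ran_inv : Φ.inv.ran = Φ.dom := by
  simp only [ran, dom, inv, inv_smul_smul]

lemma inv_apply_apply (hx : x ∈ Φ.dom) : Φ.inv (Φ x) = x := by
  obtain ⟨n, hn⟩ := mem_iUnion.1 hx
  rw [Φ.apply_of_mem_piece hn, Φ.inv.apply_of_mem_piece (n := n) (smul_mem_smul_set hn)]
  exact inv_smul_smul _ _

lemma apply_inv_apply (hy : y ∈ Φ.ran) : Φ (Φ.inv y) = y := by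
  obtain ⟨x, hx, rfl⟩ := Φ.image_dom ▸ hy
  rw [Φ.inv_apply_apply hx]

section Swap

variable {Φ} (h : Disjoint Φ.dom Φ.ran)

open Classical

noncomputable def swap : Equiv.Perm X :=
  Involutive.toPerm (Φ.dom.piecewise Φ (Φ.ran.piecewise Φ.inv id)) <| by
    intro x
    by_cases hx : x ∈ Φ.dom
    · have hy := Φ.mapsTo_dom_ran hx
      simp [hx, hy, disjoint_right.1 h hy, Φ.inv_apply_apply hx]
    by_cases hy : x ∈ Φ.ran
    · have hx' : Φ.inv x ∈ Φ.dom := Φ.ran_inv ▸ Φ.inv.mapsTo_dom_ran hy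
      simp [hx, hy, hx', Φ.apply_inv_apply hy]
    · simp [hx, hy]

lemma swap_apply_of_mem_dom (hx : x ∈ Φ.dom) : swap h x = Φ x :=
  piecewise_eq_of_mem _ _ _ hx

lemma swap_apply_of_mem_ran (hy : y ∈ Φ.ran) : swap h y = Φ.inv y :=
  (piecewise_eq_of_notMem _ _ _ (disjoint_right.1 h hy)).trans (piecewise_eq_of_mem _ _ _ hy)

lemma swap_apply_of_notMem (hx : x ∉ Φ.dom) (hy : x ∉ Φ.ran) : swap h x = x :=
  (piecewise_eq_of_notMem _ _ _ hx).trans (piecewise_eq_of_notMem _ _ _ hy)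

lemma measurable_swap : Measurable (swap h) :=
  Φ.measurable.piecewise Φ.measurableSet_dom <|
    Φ.inv.measurable.piecewise Φ.measurableSet_ran measurable_id

lemma measurePreserving_swap {μ : Measure X} [SMulInvariantMeasure G X μ] :
    MeasurePreserving (swap h) μ μ := by
  refine ⟨measurable_swap h, Measure.ext fun s hs => ?_⟩
  rw [Measure.map_apply (measurable_swap h) hs]
  have hsplit : ∀ t, MeasurableSet t →
      μ t = μ (Φ.dom ∩ t) + μ (Φ.ran ∩ t) + μ (t \ (Φ.dom ∪ Φ.ran)) := fun t ht => by
    rw [← measure_union (h.mono inter_subset_left inter_subset_left)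
      (Φ.measurableSet_ran.inter ht), ← union_inter_distrib_right, inter_comm,
      measure_inter_add_sdiff _ (Φ.measurableSet_dom.union Φ.measurableSet_ran)]
  have hdom : Φ.dom ∩ swap h ⁻¹' s = Φ.dom ∩ Φ ⁻¹' s :=
    ext fun x => and_congr_right fun hx => by rw [mem_preimage, swap_apply_of_mem_dom h hx]; rfl
  have hran : Φ.ran ∩ swap h ⁻¹' s = Φ.inv.dom ∩ Φ.inv ⁻¹' s :=
    ext fun y => and_congr_right fun hy => by rw [mem_preimage, swap_apply_of_mem_ran h hy]; rfl
  have hrest : swap h ⁻¹' s \ (Φ.dom ∪ Φ.ran) = s \ (Φ.dom ∪ Φ.ran) := by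
    ext x
    simp only [mem_sdiff, mem_preimage, mem_union, not_or, and_congr_left_iff, and_imp]
    intro hx hy
    rw [swap_apply_of_notMem h hx hy]
  rw [hsplit _ (measurable_swap h hs), hsplit _ hs, hdom, hran, hrest,
    Φ.measure_dom_inter_preimage hs, Φ.inv.measure_dom_inter_preimage hs, ran_inv,
    add_comm (μ (Φ.ran ∩ s))]

end Swap

section Greedy

variable {G X : Type*} [Group G] [MulAction G X] (pick : Set X × Set X → G) (B C : Set X)

def greedyRemainder : ℕ → Set X × Set X
  | 0 => (B, C)
  | n + 1 =>
    let p := greedyRemainder n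
    (p.1 \ (pick p • ·) ⁻¹' p.2, p.2 \ pick p • p.1)

variable {B C}

lemma greedyRemainder_antitone {m n : ℕ} (hmn : m ≤ n) :
    (greedyRemainder pick B C n).1 ⊆ (greedyRemainder pick B C m).1 ∧
      (greedyRemainder pick B C n).2 ⊆ (greedyRemainder pick B C m).2 :=
  ⟨antitone_nat_of_succ_le (f := fun n => (greedyRemainder pick B C n).1)
      (fun _ => sdiff_subset) hmn,
    antitone_nat_of_succ_le (f := fun n => (greedyRemainder pick B C n).2)
      (fun _ => sdiff_subset) hmn⟩

variable [MeasurableSpace X] [MeasurableConstSMul G X]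

lemma measurableSet_greedyRemainder (hB : MeasurableSet B) (hC : MeasurableSet C) (n : ℕ) :
    MeasurableSet (greedyRemainder pick B C n).1 ∧
      MeasurableSet (greedyRemainder pick B C n).2 := by
  induction n with
  | zero => exact ⟨hB, hC⟩
  | succ n ih => exact ⟨ih.1.diff (measurable_const_smul _ ih.2), ih.2.diff (ih.1.const_smul _)⟩

def greedy (hB : MeasurableSet B) (hC : MeasurableSet C) : PiecewiseTranslation G X where
  piece n := (greedyRemainder pick B C n).1 ∩
    (pick (greedyRemainder pick B C n) • ·) ⁻¹' (greedyRemainder pick B C n).2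
  elem n := pick (greedyRemainder pick B C n)
  measurableSet_piece n := (measurableSet_greedyRemainder pick hB hC n).1.inter
    (measurable_const_smul _ (measurableSet_greedyRemainder pick hB hC n).2)
  pairwise_disjoint_piece := by
    refine (pairwise_disjoint_on _).2 fun m n hmn => disjoint_right.2 fun x hx hxm => ?_
    exact ((greedyRemainder_antitone pick hmn).1 hx.1).2 hxm.2
  pairwise_disjoint_smul_piece := by
    refine (pairwise_disjoint_on _).2 fun m n hmn => disjoint_right.2 fun y hy hym => ?_
    obtain ⟨x, hx, rfl⟩ := hy
    exact ((greedyRemainder_antitone pick hmn).2 hx.2).2 (smul_set_mono inter_subset_left hym)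

variable (hB : MeasurableSet B) (hC : MeasurableSet C)

lemma dom_greedy_subset : (greedy pick hB hC).dom ⊆ B :=
  iUnion_subset fun n _ hx => (greedyRemainder_antitone pick (Nat.zero_le n)).1 hx.1

lemma ran_greedy_subset : (greedy pick hB hC).ran ⊆ C := by
  refine iUnion_subset fun n y hy => ?_
  obtain ⟨x, hx, rfl⟩ := hy
  exact (greedyRemainder_antitone pick (Nat.zero_le n)).2 hx.2

lemma sdiff_subset_greedyRemainder (n : ℕ) :
    B \ (greedy pick hB hC).dom ⊆ (greedyRemainder pick B C n).1 ∧
      C \ (greedy pick hB hC).ran ⊆ (greedyRemainder pick B C n).2 := by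
  induction n with
  | zero => exact ⟨sdiff_subset, sdiff_subset⟩
  | succ n ih =>
    refine ⟨fun x hx => ⟨ih.1 hx, fun hx' => hx.2 ?_⟩, fun y hy => ⟨ih.2 hy, fun hy' => hy.2 ?_⟩⟩
    · exact mem_iUnion.2 ⟨n, ih.1 hx, hx'⟩
    · obtain ⟨x, hx, rfl⟩ := hy'
      exact mem_iUnion.2 ⟨n, x, ⟨hx, ih.2 hy⟩, rfl⟩

lemma measure_sdiff_inter_preimage_sdiff_eq_zero {μ : Measure X} [IsFiniteMeasure μ]
    (hpick : ∀ p : Set X × Set X,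
      ⨆ g : G, μ (p.1 ∩ (g • ·) ⁻¹' p.2) ≤ 2 * μ (p.1 ∩ (pick p • ·) ⁻¹' p.2)) (g : G) :
    μ ((B \ (greedy pick hB hC).dom) ∩ (g • ·) ⁻¹' (C \ (greedy pick hB hC).ran)) = 0 := by
  set Φ := greedy pick hB hC
  have hsum : ∑' n, μ (Φ.piece n) ≠ ⊤ := by
    rw [← measure_iUnion Φ.pairwise_disjoint_piece Φ.measurableSet_piece]
    exact measure_ne_top μ _
  have hlim : Filter.Tendsto (fun n => 2 * μ (Φ.piece n)) Filter.atTop (nhds 0) := by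
    simpa using ENNReal.Tendsto.const_mul (ENNReal.tendsto_atTop_zero_of_tsum_ne_top hsum)
      (Or.inr ENNReal.ofNat_ne_top)
  -- what is left meets any translate in at most twice the `n`-th piece
  refine le_antisymm (ge_of_tendsto' hlim fun n => ?_) zero_le
  obtain ⟨hBn, hCn⟩ := sdiff_subset_greedyRemainder pick hB hC n
  calc _ ≤ μ ((greedyRemainder pick B C n).1 ∩ (g • ·) ⁻¹' (greedyRemainder pick B C n).2) :=
        measure_mono (inter_subset_inter hBn (preimage_mono hCn))
    _ ≤ ⨆ g : G, μ ((greedyRemainder pick B C n).1 ∩ (g • ·) ⁻¹' (greedyRemainder pick B C n).2) :=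
        le_iSup (fun g : G => μ (_ ∩ (g • ·) ⁻¹' _)) g
    _ ≤ 2 * μ (Φ.piece n) := hpick _

end Greedy

end PiecewiseTranslation

/-- The orbit full group `[R_G]`. Bimeasurability is part of the definition so that it is closed
under inverses. -/
def fullGroup (G : Type*) {X : Type*} [Group G] [MulAction G X] [MeasurableSpace X]
    (μ : Measure X) : Subgroup (Equiv.Perm X) where
  carrier := {T | MeasurePreserving T μ μ ∧ Measurable T.symm ∧ ∀ᵐ x ∂μ, ∃ g : G, T x = g • x}
  mul_mem' := by
    rintro S T ⟨hS, hS', hSG⟩ ⟨hT, hT', hTG⟩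
    refine ⟨hS.comp hT, hT'.comp hS', ?_⟩
    filter_upwards [hTG, hT.quasiMeasurePreserving.ae hSG] with x ⟨g, hg⟩ ⟨h, hh⟩
    exact ⟨h * g, by rw [Equiv.Perm.mul_apply, hh, hg, mul_smul]⟩
  one_mem' := ⟨.id μ, measurable_id, ae_of_all _ fun x => ⟨1, (one_smul G x).symm⟩⟩
  inv_mem' := by
    rintro T ⟨hT, hT', hTG⟩
    have hinv : MeasurePreserving T.symm μ μ := MeasurePreserving.symm ⟨T, hT.measurable, hT'⟩ hT
    refine ⟨hinv, hT.measurable, ?_⟩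
    filter_upwards [hinv.quasiMeasurePreserving.ae hTG] with x ⟨g, hg⟩
    rw [Equiv.apply_symm_apply] at hg
    exact ⟨g⁻¹, eq_inv_smul_iff.2 hg.symm⟩

namespace fullGroup

variable {G X : Type*} [Group G] [MulAction G X] [MeasurableSpace X] {μ : Measure X}
  {T : Equiv.Perm X}

lemma measurePreserving (hT : T ∈ fullGroup G μ) : MeasurePreserving T μ μ := hT.1

lemma measurable_symm (hT : T ∈ fullGroup G μ) : Measurable T.symm := hT.2.1

lemma ae_exists_smul (hT : T ∈ fullGroup G μ) : ∀ᵐ x ∂μ, ∃ g : G, T x = g • x := hT.2.2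

lemma image_ae_eq_image (hT : T ∈ fullGroup G μ) {s t : Set X} (h : s =ᵐ[μ] t) :
    T '' s =ᵐ[μ] T '' t := by
  simp only [Equiv.image_eq_preimage_symm]
  exact (measurePreserving (inv_mem hT)).quasiMeasurePreserving.preimage_ae_eq h

lemma measure_image (hT : T ∈ fullGroup G μ) {s : Set X} (hs : MeasurableSet s) :
    μ (T '' s) = μ s := by
  rw [Equiv.image_eq_preimage_symm]
  exact (measurePreserving (inv_mem hT)).measure_preimage hs.nullMeasurableSet

lemma measurableSet_image (hT : T ∈ fullGroup G μ) {s : Set X} (hs : MeasurableSet s) :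
    MeasurableSet (T '' s) := by
  rw [Equiv.image_eq_preimage_symm]
  exact measurable_symm hT hs

end fullGroup

lemma PiecewiseTranslation.swap_mem_fullGroup {G X : Type*} [Group G] [MulAction G X]
    [MeasurableSpace X] [MeasurableConstSMul G X] {μ : Measure X} [SMulInvariantMeasure G X μ]
    {Φ : PiecewiseTranslation G X} (h : Disjoint Φ.dom Φ.ran) :
    Φ.swap h ∈ fullGroup G μ := by
  refine ⟨Φ.measurePreserving_swap h, Φ.measurable_swap h, ae_of_all _ fun x => ?_⟩
  by_cases hx : x ∈ Φ.dom
  · rw [Φ.swap_apply_of_mem_dom h hx]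
    exact Φ.exists_apply_eq_smul x
  by_cases hy : x ∈ Φ.ran
  · rw [Φ.swap_apply_of_mem_ran h hy]
    exact Φ.inv.exists_apply_eq_smul x
  · exact ⟨1, by rw [Φ.swap_apply_of_notMem h hx hy, one_smul]⟩

section CycleOfExchanges

variable {X : Type*} {E : Set X} {σ : ℕ → X → X} {τ : ℕ → Equiv.Perm X} {n : ℕ}

def ExchangesVia (τ : Equiv.Perm X) (σ : X → X) (E : Set X) : Prop :=
  (∀ x ∈ E, τ x = σ x ∧ τ (σ x) = x) ∧ ∀ y, y ∉ E → y ∉ σ '' E → τ y = y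

lemma ExchangesVia.apply_of_ne (hσ : ∀ x ∈ E, σ 0 x = x)
    (hdisj : ∀ i j, i < j → j ≤ n → Disjoint (σ i '' E) (σ j '' E))
    {i j : ℕ} (hτ : ExchangesVia (τ j) (σ j) E) (hi : i ≤ n) (hj : j ≤ n) (hi0 : i ≠ 0)
    (hij : i ≠ j) {x : X} (hx : x ∈ E) : τ j (σ i x) = σ i x := by
  refine hτ.2 _ (fun hE => ?_) fun hσj => ?_
  · exact disjoint_right.1 (hdisj 0 i (Nat.pos_of_ne_zero hi0) hi) (mem_image_of_mem _ hx)
      ⟨_, hE, hσ _ hE⟩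
  · rcases Nat.lt_or_gt_of_ne hij with hlt | hlt
    · exact disjoint_left.1 (hdisj i j hlt hj) (mem_image_of_mem _ hx) hσj
    · exact disjoint_right.1 (hdisj j i hlt hi) (mem_image_of_mem _ hx) hσj

lemma apply_of_exchangesVia (hσ : ∀ x ∈ E, σ 0 x = x)
    (hdisj : ∀ i j, i < j → j ≤ n → Disjoint (σ i '' E) (σ j '' E))
    (hτ : ∀ j, 1 ≤ j → j ≤ n → ExchangesVia (τ j) (σ j) E)
    {P : ℕ → Equiv.Perm X} (hP0 : P 0 = 1) (hP : ∀ k, P (k + 1) = τ (k + 1) * P k)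
    {k : ℕ} (hk : k ≤ n) {x : X} (hx : x ∈ E) :
    (∀ j < k, P k (σ j x) = σ (j + 1) x) ∧ P k (σ k x) = x ∧
      ∀ j, k < j → j ≤ n → P k (σ j x) = σ j x := by
  induction k with
  | zero => simp [hP0, hσ x hx]
  | succ k ih =>
    obtain ⟨ih_lt, ih_eq, ih_gt⟩ := ih (by omega)
    have hτk := hτ (k + 1) (by omega) hk
    simp only [hP, Equiv.Perm.mul_apply]
    refine ⟨fun j hj => ?_, ?_, fun j hj hjn => ?_⟩
    · rcases Nat.lt_succ_iff_lt_or_eq.1 hj with hj | rfl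
      · rw [ih_lt j hj, hτk.apply_of_ne hσ hdisj (by omega) hk (by omega) (by omega) hx]
      · rw [ih_eq, (hτk.1 x hx).1]
    · rw [ih_gt (k + 1) (by omega) hk, (hτk.1 x hx).2]
    · rw [ih_gt j (by omega) hjn, hτk.apply_of_ne hσ hdisj hjn hk (by omega) (by omega) hx]

lemma apply_eq_self_of_exchangesVia (hσ : ∀ x ∈ E, σ 0 x = x)
    (hτ : ∀ j, 1 ≤ j → j ≤ n → ExchangesVia (τ j) (σ j) E)
    {P : ℕ → Equiv.Perm X} (hP0 : P 0 = 1) (hP : ∀ k, P (k + 1) = τ (k + 1) * P k)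
    {y : X} (hy : ∀ j ≤ n, y ∉ σ j '' E) {k : ℕ} (hk : k ≤ n) : P k y = y := by
  induction k with
  | zero => simp [hP0]
  | succ k ih =>
    have hyE : y ∉ E := fun hyE => hy 0 (Nat.zero_le n) ⟨y, hyE, hσ y hyE⟩
    rw [hP, Equiv.Perm.mul_apply, ih (by omega),
      (hτ (k + 1) (by omega) hk).2 y hyE (hy (k + 1) hk)]

theorem exists_pow_succ_eq_one_of_exchangesVia (hσ : ∀ x ∈ E, σ 0 x = x)
    (hdisj : ∀ i j, i < j → j ≤ n → Disjoint (σ i '' E) (σ j '' E))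
    (hτ : ∀ j, 1 ≤ j → j ≤ n → ExchangesVia (τ j) (σ j) E) :
    ∃ T ∈ Subgroup.closure (τ '' Icc 1 n), T ^ (n + 1) = 1 ∧
      ∀ j ≤ n, ∀ x ∈ E, (T ^ j) x = σ j x := by
  -- the product of the transpositions `(0 n) ⋯ (0 1)` is the cycle `(0 1 ⋯ n)`
  set P : ℕ → Equiv.Perm X := fun k => ((List.range' 1 k).map τ).reverse.prod
  have hP : ∀ k, P (k + 1) = τ (k + 1) * P k := fun k => by
    simp [P, List.range'_concat, add_comm]
  have hshift := fun x hx => apply_of_exchangesVia hσ hdisj hτ rfl hP le_rfl (x := x) hx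
  have hpow : ∀ j ≤ n, ∀ x ∈ E, (P n ^ j) x = σ j x := by
    intro j hj x hx
    induction j with
    | zero => exact (hσ x hx).symm
    | succ j ih => rw [pow_succ', Equiv.Perm.mul_apply, ih (by omega), (hshift x hx).1 j hj]
  have hcycle : ∀ x ∈ E, (P n ^ (n + 1)) x = x := fun x hx => by
    rw [pow_succ', Equiv.Perm.mul_apply, hpow n le_rfl x hx, (hshift x hx).2.1]
  refine ⟨P n, Subgroup.list_prod_mem _ fun t ht => ?_, Equiv.ext fun y => ?_, hpow⟩
  · obtain ⟨j, hj, rfl⟩ := List.mem_map.1 (List.mem_reverse.1 ht)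
    rw [List.mem_range'_1] at hj
    exact Subgroup.subset_closure ⟨j, ⟨hj.1, by omega⟩, rfl⟩
  · by_cases hy : ∃ j ≤ n, y ∈ σ j '' E
    · obtain ⟨j, hj, x, hx, rfl⟩ := hy
      rw [← hpow j hj x hx, ← Equiv.Perm.mul_apply, ← pow_add, add_comm, pow_add,
        Equiv.Perm.mul_apply, hcycle x hx]
      rfl
    · push Not at hy
      exact Equiv.Perm.pow_apply_eq_self_of_apply_eq_self
        (apply_eq_self_of_exchangesVia hσ hτ rfl hP hy le_rfl) _

end CycleOfExchanges

lemma PiecewiseTranslation.exchangesVia_swap {G X : Type*} [Group G] [MulAction G X]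
    [MeasurableSpace X] [MeasurableConstSMul G X] {Φ : PiecewiseTranslation G X}
    (h : Disjoint Φ.dom Φ.ran) : ExchangesVia (Φ.swap h) Φ Φ.dom :=
  ⟨fun x hx => ⟨Φ.swap_apply_of_mem_dom h hx, by
      rw [Φ.swap_apply_of_mem_ran h (Φ.mapsTo_dom_ran hx), Φ.inv_apply_apply hx]⟩,
    fun _ hx hy => Φ.swap_apply_of_notMem h hx (Φ.image_dom ▸ hy)⟩

theorem exists_mem_fullGroup_pow_eq_one_of_disjoint_translates {G X : Type*} [Group G]
    [MulAction G X] [MeasurableSpace X] [MeasurableConstSMul G X] {μ : Measure X}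
    [SMulInvariantMeasure G X μ] {E : Set X} {n : ℕ} (Ψ : ℕ → PiecewiseTranslation G X)
    (hΨ : ∀ j, 1 ≤ j → j ≤ n → (Ψ j).dom = E ∧ Disjoint E (Ψ j).ran)
    (hΨdisj : ∀ i j, 1 ≤ i → i < j → j ≤ n → Disjoint (Ψ i).ran (Ψ j).ran) :
    ∃ T ∈ fullGroup G μ, T ^ (n + 1) = 1 ∧
      ∀ i j, i < j → j ≤ n → Disjoint (⇑(T ^ i) '' E) (⇑(T ^ j) '' E) := by
  have hswap : ∀ j, 1 ≤ j → j ≤ n → Disjoint (Ψ j).dom (Ψ j).ran := fun j hj1 hjn =>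
    (hΨ j hj1 hjn).1 ▸ (hΨ j hj1 hjn).2
  set σ : ℕ → X → X := fun j => if j = 0 then id else Ψ j
  set τ : ℕ → Equiv.Perm X := fun j =>
    if h : 1 ≤ j ∧ j ≤ n then (Ψ j).swap (hswap j h.1 h.2) else 1
  have hσ : ∀ j, 1 ≤ j → j ≤ n → σ j '' E = (Ψ j).ran := fun j hj1 hjn => by
    simp only [σ, if_neg (show j ≠ 0 by omega), ← (hΨ j hj1 hjn).1]
    exact (Ψ j).image_dom
  have hdisj : ∀ i j, i < j → j ≤ n → Disjoint (σ i '' E) (σ j '' E) := by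
    intro i j hij hjn
    rw [hσ j (by omega) hjn]
    rcases Nat.eq_zero_or_pos i with rfl | hi
    · simpa [σ] using (hΨ j (by omega) hjn).2
    · rw [hσ i hi (by omega)]
      exact hΨdisj i j hi hij hjn
  have hτ : ∀ j, 1 ≤ j → j ≤ n → ExchangesVia (τ j) (σ j) E := fun j hj1 hjn => by
    simp only [τ, σ, dif_pos (And.intro hj1 hjn), if_neg (show j ≠ 0 by omega)]
    exact (hΨ j hj1 hjn).1 ▸ PiecewiseTranslation.exchangesVia_swap _
  obtain ⟨T, hTτ, hTpow, hTσ⟩ := exists_pow_succ_eq_one_of_exchangesVia (fun _ _ => rfl) hdisj hτ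
  refine ⟨T, (Subgroup.closure_le _).2 (image_subset_iff.2 fun j hj => ?_) hTτ, hTpow,
    fun i j hij hjn => ?_⟩
  · simp only [mem_preimage, τ, dif_pos (Set.mem_Icc.1 hj)]
    exact PiecewiseTranslation.swap_mem_fullGroup _
  · rw [image_congr (hTσ i (by omega)), image_congr (hTσ j hjn)]
    exact hdisj i j hij hjn

section Ergodic

variable (G : Type*) {X : Type*} [Group G] [TopologicalSpace G] [IsTopologicalGroup G]
  [LocallyCompactSpace G] [MeasurableSpace G] [BorelSpace G] [MulAction G X]

noncomputable def visitMeasure (C : Set X) (x : X) : ℝ≥0∞ := Measure.haar {g : G | g⁻¹ • x ∈ C}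

variable {G}

lemma visitMeasure_smul (C : Set X) (g : G) (x : X) :
    visitMeasure G C (g • x) = visitMeasure G C x := by
  have h : {h : G | h⁻¹ • g • x ∈ C} = (g⁻¹ * ·) ⁻¹' {h : G | h⁻¹ • x ∈ C} := by
    ext h
    simp [mul_smul]
  rw [visitMeasure, h, measure_preimage_mul, visitMeasure]

variable [SecondCountableTopology G] [MeasurableSpace X] [MeasurableSMul₂ G X] {μ : Measure X}
  {B C : Set X}

lemma measurable_visitMeasure (hC : MeasurableSet C) : Measurable (visitMeasure G C) :=
  measurable_measure_prodMk_right ((measurable_fst.inv.smul measurable_snd) hC)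

lemma setLIntegral_visitMeasure [SFinite μ] (hB : MeasurableSet B) (hC : MeasurableSet C) :
    ∫⁻ x in B, visitMeasure G C x ∂μ = ∫⁻ g : G, μ (B ∩ (g⁻¹ • ·) ⁻¹' C) ∂Measure.haar := by
  have hS : MeasurableSet {p : G × X | p.2 ∈ B ∧ p.1⁻¹ • p.2 ∈ C} :=
    (measurable_snd hB).inter ((measurable_fst.inv.smul measurable_snd) hC)
  calc ∫⁻ x in B, visitMeasure G C x ∂μ
      = ∫⁻ x, Measure.haar ((·, x) ⁻¹' {p : G × X | p.2 ∈ B ∧ p.1⁻¹ • p.2 ∈ C}) ∂μ := by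
        rw [← lintegral_indicator hB]
        refine lintegral_congr fun x => ?_
        by_cases hx : x ∈ B <;> simp [hx, visitMeasure]
    _ = ∫⁻ g : G, μ (B ∩ (g⁻¹ • ·) ⁻¹' C) ∂Measure.haar := by
        rw [← Measure.prod_apply_symm hS, Measure.prod_apply hS]
        rfl

lemma ae_visitMeasure_ne_zero [SFinite μ] [ErgodicSMul G X μ] (hC : MeasurableSet C)
    (hC0 : μ C ≠ 0) : ∀ᵐ x ∂μ, visitMeasure G C x ≠ 0 := by
  have hW : MeasurableSet {x | visitMeasure G C x ≠ 0} :=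
    (measurable_visitMeasure hC (measurableSet_singleton 0)).compl
  have hconst := ErgodicSMul.aeconst_of_forall_preimage_smul_ae_eq (G := G) (μ := μ) hW fun g => by
    simp only [preimage_ofPred_eq, visitMeasure_smul]
    rfl
  refine (Filter.eventuallyConst_set.1 hconst).resolve_right fun hzero => ?_
  have hint : ∫⁻ x, visitMeasure G C x ∂μ = μ C * Measure.haar (univ : Set G) := by
    rw [← setLIntegral_univ, setLIntegral_visitMeasure MeasurableSet.univ hC]
    simp only [univ_inter, measure_preimage_smul, lintegral_const]
  have hpos : (Measure.haar : Measure G) univ ≠ 0 := (isOpen_univ.measure_pos _ univ_nonempty).ne'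
  refine mul_ne_zero hC0 hpos (hint ▸ (lintegral_eq_zero_iff (measurable_visitMeasure hC)).2 ?_)
  filter_upwards [hzero] with x hx
  simpa using hx

theorem measure_eq_zero_of_forall_measure_inter_preimage_smul_eq_zero [SFinite μ]
    [ErgodicSMul G X μ] (hB : MeasurableSet B) (hC : MeasurableSet C) (hC0 : μ C ≠ 0)
    (h : ∀ g : G, μ (B ∩ (g • ·) ⁻¹' C) = 0) : μ B = 0 := by
  have hint : ∫⁻ x in B, visitMeasure G C x ∂μ = 0 := by
    simp [setLIntegral_visitMeasure hB hC, h]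
  have hzero := (setLIntegral_eq_zero_iff hB (measurable_visitMeasure hC)).1 hint
  rw [measure_eq_zero_iff_ae_notMem]
  filter_upwards [hzero, ae_visitMeasure_ne_zero (G := G) hC hC0] with x hxB hx
  exact fun hB => hx (hxB hB)

end Ergodic

lemma ae_eq_inter_biInter_dom {G X : Type*} [Group G] [MulAction G X] [MeasurableSpace X]
    {μ : Measure X} {A : Set X} (Φ : ℕ → PiecewiseTranslation G X) {n : ℕ}
    (hΦ : ∀ j, 1 ≤ j → j ≤ n → μ (A \ (Φ j).dom) = 0) :
    A =ᵐ[μ] (A ∩ ⋂ j ∈ Finset.Icc 1 n, (Φ j).dom : Set X) := by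
  rw [ae_eq_set, sdiff_eq_empty.2 inter_subset_left, measure_empty, sdiff_self_inter]
  refine ⟨?_, rfl⟩
  simp only [sdiff_iInter, measure_iUnion_null_iff, Finset.mem_Icc]
  exact fun j hj => hΦ j hj.1 hj.2

section Transitivity

variable {G X : Type*} [Group G] [TopologicalSpace G] [IsTopologicalGroup G]
  [LocallyCompactSpace G] [SecondCountableTopology G] [MeasurableSpace G] [BorelSpace G]
  [MulAction G X] [MeasurableSpace X] [MeasurableSMul₂ G X] {μ : Measure X} [IsFiniteMeasure μ]
  [ErgodicSMul G X μ] {A B C : Set X}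

theorem exists_piecewiseTranslation_of_measure_le (hB : MeasurableSet B) (hC : MeasurableSet C)
    (hBC : μ B ≤ μ C) :
    ∃ Φ : PiecewiseTranslation G X, Φ.dom ⊆ B ∧ Φ.ran ⊆ C ∧ μ (B \ Φ.dom) = 0 := by
  choose pick hpick using fun p : Set X × Set X =>
    exists_iSup_le_two_mul (fun g : G => μ (p.1 ∩ (g • ·) ⁻¹' p.2))
      (ne_top_of_le_ne_top (measure_ne_top μ univ) (iSup_le fun _ => measure_mono (subset_univ _)))
  set Φ := PiecewiseTranslation.greedy pick hB hC
  have hdom := PiecewiseTranslation.dom_greedy_subset pick hB hC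
  have hran := PiecewiseTranslation.ran_greedy_subset pick hB hC
  refine ⟨Φ, hdom, hran, ?_⟩
  have hle : μ (B \ Φ.dom) ≤ μ (C \ Φ.ran) := by
    rw [measure_sdiff hdom Φ.measurableSet_dom.nullMeasurableSet (measure_ne_top μ _),
      measure_sdiff hran Φ.measurableSet_ran.nullMeasurableSet (measure_ne_top μ _), Φ.measure_ran]
    exact tsub_le_tsub_right hBC _
  rcases eq_or_ne (μ (C \ Φ.ran)) 0 with h0 | h0
  · exact le_antisymm (h0 ▸ hle) zero_le
  · exact measure_eq_zero_of_forall_measure_inter_preimage_smul_eq_zero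
      (hB.diff Φ.measurableSet_dom) (hC.diff Φ.measurableSet_ran) h0
      (PiecewiseTranslation.measure_sdiff_inter_preimage_sdiff_eq_zero pick hB hC hpick)

theorem exists_disjoint_translates (hA : MeasurableSet A) {m : ℕ} (hm : (m + 1) * μ A ≤ μ univ) :
    ∃ Φ : ℕ → PiecewiseTranslation G X,
      (∀ j, 1 ≤ j → j ≤ m → (Φ j).dom ⊆ A ∧ μ (A \ (Φ j).dom) = 0 ∧ Disjoint A (Φ j).ran) ∧
      ∀ i j, 1 ≤ i → i < j → j ≤ m → Disjoint (Φ i).ran (Φ j).ran := by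
  induction m with
  | zero => exact ⟨fun _ => default, fun j hj hj' => by omega, fun i j hi hij hj => by omega⟩
  | succ m ih =>
    obtain ⟨Φ, hΦ, hΦdisj⟩ := ih (le_trans (by gcongr; simp) hm)
    set R := A ∪ ⋃ j ∈ Finset.Icc 1 m, (Φ j).ran
    have hR : MeasurableSet R :=
      hA.union (Finset.measurableSet_biUnion _ fun j _ => (Φ j).measurableSet_ran)
    have hμR : μ R ≤ (m + 1) * μ A := by
      calc μ R ≤ μ A + ∑ j ∈ Finset.Icc 1 m, μ (Φ j).ran :=
            (measure_union_le _ _).trans (by gcongr; exact measure_biUnion_finset_le _ _)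
        _ ≤ μ A + ∑ j ∈ Finset.Icc 1 m, μ A := by
            refine add_le_add le_rfl (Finset.sum_le_sum fun j hj => ?_)
            obtain ⟨hj1, hjm⟩ := Finset.mem_Icc.1 hj
            exact (Φ j).measure_ran (μ := μ) |>.trans_le (measure_mono (hΦ j hj1 hjm).1)
        _ = (m + 1) * μ A := by simp [add_mul, add_comm]
    have hAR : μ A ≤ μ Rᶜ := by
      rw [measure_compl hR (measure_ne_top μ R)]
      refine ENNReal.le_sub_of_add_le_right (measure_ne_top μ R) ?_
      calc μ A + μ R ≤ μ A + (m + 1) * μ A := by gcongr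
        _ = (↑(m + 1) + 1) * μ A := by push_cast; ring
        _ ≤ μ univ := hm
    obtain ⟨Ψ, hΨdom, hΨran, hΨnull⟩ :=
      exists_piecewiseTranslation_of_measure_le (G := G) hA hR.compl hAR
    have hRΨ : Disjoint R Ψ.ran := disjoint_compl_right.mono_right hΨran
    refine ⟨Function.update Φ (m + 1) Ψ, fun j hj1 hjm => ?_, fun i j hi hij hjm => ?_⟩
    · rcases Nat.lt_or_ge j (m + 1) with hj | hj
      · rw [Function.update_of_ne (by omega)]
        exact hΦ j hj1 (by omega)
      · rw [show j = m + 1 by omega, Function.update_self]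
        exact ⟨hΨdom, hΨnull, hRΨ.mono_left subset_union_left⟩
    · rw [Function.update_of_ne (show i ≠ m + 1 by omega)]
      rcases Nat.lt_or_ge j (m + 1) with hj | hj
      · rw [Function.update_of_ne (by omega)]
        exact hΦdisj i j hi hij (by omega)
      · rw [show j = m + 1 by omega, Function.update_self]
        refine hRΨ.mono_left (subset_union_of_subset_right ?_ A)
        exact subset_biUnion_of_mem (u := fun j => (Φ j).ran) (Finset.mem_Icc.2 ⟨hi, by omega⟩)

theorem exists_ae_eq_disjoint_translates (hA : MeasurableSet A) {n : ℕ}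
    (hAn : (n + 1) * μ A ≤ μ univ) :
    ∃ E, MeasurableSet E ∧ E ⊆ A ∧ A =ᵐ[μ] E ∧ ∃ Ψ : ℕ → PiecewiseTranslation G X,
      (∀ j, 1 ≤ j → j ≤ n → (Ψ j).dom = E ∧ Disjoint E (Ψ j).ran) ∧
      ∀ i j, 1 ≤ i → i < j → j ≤ n → Disjoint (Ψ i).ran (Ψ j).ran := by
  obtain ⟨Φ, hΦ, hΦdisj⟩ := exists_disjoint_translates (G := G) hA hAn
  set E := A ∩ ⋂ j ∈ Finset.Icc 1 n, (Φ j).dom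
  have hE : MeasurableSet E :=
    hA.inter (Finset.measurableSet_biInter _ fun j _ => (Φ j).measurableSet_dom)
  refine ⟨E, hE, inter_subset_left,
    ae_eq_inter_biInter_dom Φ fun j hj1 hjn => (hΦ j hj1 hjn).2.1,
    fun j => (Φ j).restrict E hE, fun j hj1 hjn => ⟨?_, ?_⟩, fun i j hi hij hjn => ?_⟩
  · refine ((Φ j).dom_restrict hE).trans (inter_eq_right.2 ?_)
    exact inter_subset_right.trans (biInter_subset_of_mem (Finset.mem_Icc.2 ⟨hj1, hjn⟩))
  · exact (hΦ j hj1 hjn).2.2.mono inter_subset_left ((Φ j).ran_restrict_subset hE)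
  · exact (hΦdisj i j hi hij hjn).mono ((Φ i).ran_restrict_subset hE)
      ((Φ j).ran_restrict_subset hE)

end Transitivity

section Cyclic

variable {G X : Type*} [Group G] [TopologicalSpace G] [IsTopologicalGroup G]
  [LocallyCompactSpace G] [SecondCountableTopology G] [MeasurableSpace G] [BorelSpace G]
  [MulAction G X] [MeasurableSpace X] [MeasurableSMul₂ G X] {μ : Measure X}
  [IsProbabilityMeasure μ] [ErgodicSMul G X μ] {A : Set X}

theorem exists_mem_fullGroup_pow_eq_one (hA : MeasurableSet A) {K : ℕ} (hAK : K * μ A = 1) :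
    ∃ T ∈ fullGroup G μ, T ^ K = 1 ∧
      (∀ i j, i < j → j < K → μ ((T ^ i) '' A ∩ (T ^ j) '' A) = 0) ∧
      μ (⋃ i ∈ Finset.range K, (T ^ i) '' A) = 1 := by
  obtain ⟨n, rfl⟩ : ∃ n, K = n + 1 := Nat.exists_eq_succ_of_ne_zero (by rintro rfl; simp at hAK)
  obtain ⟨E, hE, hEA, hAE, Ψ, hΨ, hΨdisj⟩ :=
    exists_ae_eq_disjoint_translates (G := G) (μ := μ) hA (n := n)
      (by rw [measure_univ]; exact_mod_cast hAK.le)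
  obtain ⟨T, hT, hTpow, hTdisj⟩ :=
    exists_mem_fullGroup_pow_eq_one_of_disjoint_translates (μ := μ) Ψ hΨ hΨdisj
  have hTA : ∀ j, ⇑(T ^ j) '' A =ᵐ[μ] ⇑(T ^ j) '' E :=
    fun j => fullGroup.image_ae_eq_image (pow_mem hT j) hAE
  refine ⟨T, hT, hTpow, fun i j hij hj => ?_, le_antisymm prob_le_one ?_⟩
  · rw [measure_congr ((hTA i).inter (hTA j)), (hTdisj i j hij (by omega)).inter_eq, measure_empty]
  calc (1 : ℝ≥0∞) = ∑ i ∈ Finset.range (n + 1), μ ((T ^ i) '' E) := by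
        simp only [fullGroup.measure_image (pow_mem hT _) hE, ← measure_congr hAE,
          Finset.sum_const, Finset.card_range, nsmul_eq_mul]
        exact hAK.symm
    _ = μ (⋃ i ∈ Finset.range (n + 1), (T ^ i) '' E) := by
        refine (measure_biUnion_finset (fun i hi j hj hij => ?_)
          fun i _ => fullGroup.measurableSet_image (pow_mem hT i) hE).symm
        rcases Nat.lt_or_gt_of_ne hij with h | h
        · exact hTdisj i j h (by simpa [Nat.lt_succ_iff] using hj)
        · exact (hTdisj j i h (by simpa [Nat.lt_succ_iff] using hi)).symm
    _ ≤ μ (⋃ i ∈ Finset.range (n + 1), (T ^ i) '' A) :=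
        measure_mono (biUnion_mono subset_rfl fun i _ => image_mono hEA)

end Cyclic

lemma ergodicSMul_of_measure_symmDiff_image_smul {G X : Type*} [Group G] [MulAction G X]
    [MeasurableSpace X] {μ : Measure X} [IsProbabilityMeasure μ]
    (hmp : ∀ g : G, MeasurePreserving (fun x : X => g • x) μ μ)
    (herg : ∀ s : Set X, MeasurableSet s →
      (∀ g : G, μ (symmDiff ((fun x => g • x) '' s) s) = 0) → μ s = 0 ∨ μ s = 1) :
    ErgodicSMul G X μ where
  measure_preimage_smul g _ hs := (hmp g).measure_preimage hs.nullMeasurableSet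
  aeconst_of_forall_preimage_smul_ae_eq {s} hs hinv := by
    refine Filter.eventuallyConst_set'.2 <|
      (herg s hs fun g => ?_).imp ae_eq_empty.2 fun h1 => ae_eq_univ.2 ?_
    · rw [image_smul, ← preimage_smul_inv, measure_symmDiff_eq_zero_iff]
      exact hinv g⁻¹
    · rwa [prob_compl_eq_zero_iff hs]

theorem cross_section_cyclic_element_general
    (G : Type*) [Group G] [TopologicalSpace G] [IsTopologicalGroup G]
    [LocallyCompactSpace G] [PolishSpace G]
    [MeasurableSpace G] [BorelSpace G]
    (X : Type*) [MeasurableSpace X]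
    (μ : Measure X) [IsProbabilityMeasure μ]
    [MulAction G X]
    (hBorel : Measurable fun p : G × X => p.1 • p.2)
    (hmp : ∀ g : G, MeasurePreserving (fun x : X => g • x) μ μ)
    (herg : ∀ s : Set X, MeasurableSet s →
      (∀ g : G, μ (symmDiff ((fun x => g • x) '' s) s) = 0) → μ s = 0 ∨ μ s = 1)
    (K : ℕ) (hK : 1 ≤ K)
    (A : Set X)
    (hAmeas : MeasurableSet A)
    (hAK : μ A = 1 / K) :
    ∃ T : X ≃ᵐ X, MeasurePreserving T μ μ ∧
      (∀ᵐ x ∂μ, ∃ g : G, T x = g • x) ∧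
      (∀ᵐ x ∂μ, T^[K] x = x) ∧
      (∀ i j, i < j → j < K → μ (T^[i] '' A ∩ T^[j] '' A) = 0) ∧
      μ (⋃ i ∈ Finset.range K, T^[i] '' A) = 1 := by
  have : MeasurableSMul₂ G X := ⟨hBorel⟩
  have : ErgodicSMul G X μ := ergodicSMul_of_measure_symmDiff_image_smul hmp herg
  have hKA : (K : ℝ≥0∞) * μ A = 1 := by
    rw [hAK, mul_one_div, ENNReal.div_self (by exact_mod_cast (by omega : K ≠ 0))
      (ENNReal.natCast_ne_top K)]
  obtain ⟨T, hT, hTK, hdisj, hcover⟩ := exists_mem_fullGroup_pow_eq_one (G := G) hAmeas hKA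
  refine ⟨⟨T, (fullGroup.measurePreserving hT).measurable, fullGroup.measurable_symm hT⟩,
    fullGroup.measurePreserving hT, fullGroup.ae_exists_smul hT, ae_of_all _ fun x => ?_, ?_, ?_⟩
  · change (⇑T)^[K] x = x
    rw [← Equiv.Perm.coe_pow, hTK, Equiv.Perm.coe_one, id]
  · simpa only [MeasurableEquiv.coe_mk, ← Equiv.Perm.coe_pow] using hdisj
  · simpa only [MeasurableEquiv.coe_mk, ← Equiv.Perm.coe_pow] using hcover

/-- Let `G` be a locally compact Polish group acting essentially freely, ergodically and
measure-preservingly on `(X,μ)`, let `Y` be a cross-section with injectivity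
neighborhood `U`, and suppose `A := U • Y` has `μ(A) = 1/K`. Then there is an element
`T` of the orbit full group of order `K` such that `A, T(A), ..., T^{K-1}(A)` partition
a full-measure subset of `X`. -/
theorem cross_section_cyclic_element
    (G : Type*) [Group G] [TopologicalSpace G] [IsTopologicalGroup G]
    [LocallyCompactSpace G] [PolishSpace G]
    [MeasurableSpace G] [BorelSpace G]
    (X : Type*) [MeasurableSpace X] [StandardBorelSpace X]
    (μ : Measure X) [IsProbabilityMeasure μ]
    [MulAction G X]
    (hBorel : Measurable fun p : G × X => p.1 • p.2)
    (hmp : ∀ g : G, MeasurePreserving (fun x : X => g • x) μ μ)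
    (hfree : ∀ᵐ x ∂μ, ∀ g : G, g • x = x → g = 1)
    (herg : ∀ s : Set X, MeasurableSet s →
      (∀ g : G, μ (symmDiff ((fun x => g • x) '' s) s) = 0) → μ s = 0 ∨ μ s = 1)
    (Y : Set X) (hY : MeasurableSet Y)
    (U : Set G) (hU : U ∈ nhds (1 : G))
    (hinj : Set.InjOn (fun p : G × X => p.1 • p.2) (U ×ˢ Y))
    (hcover : μ (Set.image2 (fun (g : G) (y : X) => g • y) Set.univ Y)ᶜ = 0)
    (K : ℕ) (hK : 1 ≤ K)
    (A : Set X) (hA : A = Set.image2 (fun (g : G) (y : X) => g • y) U Y)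
    (hAmeas : MeasurableSet A)
    (hAK : μ A = 1 / K) :
    ∃ T : X ≃ᵐ X, MeasurePreserving T μ μ ∧
      (∀ᵐ x ∂μ, ∃ g : G, T x = g • x) ∧
      (∀ᵐ x ∂μ, T^[K] x = x) ∧
      (∀ i j, i < j → j < K → μ (T^[i] '' A ∩ T^[j] '' A) = 0) ∧
      μ (⋃ i ∈ Finset.range K, T^[i] '' A) = 1 :=
  cross_section_cyclic_element_general G X μ hBorel hmp herg K hK A hAmeas hAK
end

section
/- Let G be a locally compact Polish group acting essentially freely on (X,μ) and let M = L^∞(X,μ) ⋊ G be the crossed product von Neumann algebra on L²(G × X, m × μ). Then the Koopman-type representation π of the orbit full group [R_G], given by (π(g)f)(h,x) = f(g(x)⁻¹h, g(x)⁻¹x), takes values in the unitary group of M, i.e., π(g) commutes with all operators f̃ (for f ∈ L^∞(X)) and with all right translations 1 × ρ_{h'}. -/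
open MeasureTheory

/-!
The transformation `(h, x) ↦ (c x * h, c x • x)` of `G × X` is a skew product over the
measure-preserving map `x ↦ c x • x` whose fibre maps are left translations, so it preserves
`m × μ` by left invariance of `m`. It acts on `G` by left multiplication, which commutes with
the right translations, and it preserves `h⁻¹ • x`, the only coordinate the multiplication
operators `f̃` see.
-/

theorem MeasureTheory.MeasurePreserving.skew_mul_left {G X Y : Type*} [Mul G]
    [MeasurableSpace G] [MeasurableMul₂ G] {m : Measure G} [m.IsMulLeftInvariant] [SFinite m]
    [MeasurableSpace X] [MeasurableSpace Y] {μ : Measure X} {ν : Measure Y}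
    [SFinite μ] [SFinite ν]
    {T : X → Y} (hT : MeasurePreserving T μ ν) {c : X → G} (hc : Measurable c) :
    MeasurePreserving (fun p : G × X => (c p.2 * p.1, T p.2)) (m.prod μ) (m.prod ν) := by
  have hskew : MeasurePreserving (fun p : X × G => (T p.1, c p.1 * p.2)) (μ.prod m) (ν.prod m) :=
    hT.skew_product (g := fun x h => c x * h) ((hc.comp measurable_fst).mul measurable_snd)
      (ae_of_all _ fun x => (measurePreserving_mul_left m (c x)).map_eq)
  exact Measure.measurePreserving_swap.comp (hskew.comp Measure.measurePreserving_swap)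

section CrossedProduct

variable {G X R : Type*} [Group G] [MulAction G X]

/-- The operator `π(g)` of the full-group element `g` with cocycle `c`. -/
def cocycleKoopman (c : X → G) (ξ : G × X → R) : G × X → R :=
  fun p => ξ ((c p.2)⁻¹ * p.1, (c p.2)⁻¹ • p.2)

def rightTranslate (h' : G) (ξ : G × X → R) : G × X → R :=
  fun p => ξ (p.1 * h', p.2)

/-- The operator `f̃` of the crossed product. -/
def crossedMultiplier [Mul R] (f : X → R) (ξ : G × X → R) : G × X → R :=
  fun p => f (p.1⁻¹ • p.2) * ξ p

theorem cocycleKoopman_rightTranslate (c : X → G) (h' : G) (ξ : G × X → R) :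
    cocycleKoopman c (rightTranslate h' ξ) = rightTranslate h' (cocycleKoopman c ξ) := by
  funext p
  simp only [cocycleKoopman, rightTranslate, mul_assoc]

theorem inv_mul_inv_smul_inv_smul (a h : G) (x : X) : (a⁻¹ * h)⁻¹ • a⁻¹ • x = h⁻¹ • x := by
  rw [← mul_smul, mul_inv_rev, inv_inv, mul_assoc, mul_inv_cancel, mul_one]

theorem cocycleKoopman_crossedMultiplier [Mul R] (c : X → G) (f : X → R) (ξ : G × X → R) :
    cocycleKoopman c (crossedMultiplier f ξ) = crossedMultiplier f (cocycleKoopman c ξ) := by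
  funext p
  simp only [cocycleKoopman, crossedMultiplier, inv_mul_inv_smul_inv_smul]

end CrossedProduct

theorem full_group_repr_in_crossed_product_general
    (G : Type*) [Group G] [TopologicalSpace G] [IsTopologicalGroup G]
    [PolishSpace G]
    [MeasurableSpace G] [BorelSpace G]
    (m : Measure G) [m.IsHaarMeasure] [SigmaFinite m]
    (X : Type*) [MeasurableSpace X] (μ : Measure X) [IsProbabilityMeasure μ]
    [MulAction G X]
    (c : X → G) (hc : Measurable c)
    (hT : MeasurePreserving (fun x : X => c x • x) μ μ) :
    -- π(g) is a unitary: the underlying transformation preserves m × μ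
    MeasurePreserving (fun p : G × X => (c p.2 * p.1, c p.2 • p.2)) (m.prod μ) (m.prod μ)
    ∧
    -- π(g) commutes with the right translations ρ_{h'}
    (∀ (ξ : G × X → ℂ) (h' : G),
      (fun p : G × X => (fun q : G × X => ξ (q.1 * h', q.2))
          ((c p.2)⁻¹ * p.1, (c p.2)⁻¹ • p.2))
        = fun p : G × X =>
            (fun q : G × X => ξ ((c q.2)⁻¹ * q.1, (c q.2)⁻¹ • q.2)) (p.1 * h', p.2))
    ∧
    -- π(g) commutes with the operators f̃, (f̃ ξ)(h,x) = f(h⁻¹ • x) ξ(h,x)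
    (∀ (ξ : G × X → ℂ) (f : X → ℂ),
      (fun p : G × X => (fun q : G × X => f (q.1⁻¹ • q.2) * ξ q)
          ((c p.2)⁻¹ * p.1, (c p.2)⁻¹ • p.2))
        = fun p : G × X =>
            f (p.1⁻¹ • p.2) *
              (fun q : G × X => ξ ((c q.2)⁻¹ * q.1, (c q.2)⁻¹ • q.2)) p) :=
  ⟨hT.skew_mul_left hc, fun ξ h' => cocycleKoopman_rightTranslate c h' ξ,
    fun ξ f => cocycleKoopman_crossedMultiplier c f ξ⟩

/-- For a free measure-preserving action of a locally compact unimodular Polish group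
`G` on `(X,μ)`, the Koopman-type representation of an element of the orbit full group
(given by a cocycle `c : X → G` with `x ↦ c x • x` an automorphism), namely
`(π(g)ξ)(h,x) = ξ(c(x)⁻¹ h, c(x)⁻¹ • x)`, is a unitary of the crossed product
`L^∞(X) ⋊ G`: the underlying transformation of `G × X` preserves `m × μ`, and `π(g)`
commutes with the operators `f̃` (for `f ∈ L^∞(X)`) and with the right translations
`ρ_{h'}`, which generate the commutant. -/
theorem full_group_repr_in_crossed_product
    (G : Type*) [Group G] [TopologicalSpace G] [IsTopologicalGroup G]
    [LocallyCompactSpace G] [PolishSpace G]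
    [MeasurableSpace G] [BorelSpace G]
    (m : Measure G) [m.IsHaarMeasure] [m.IsMulRightInvariant] [SigmaFinite m]
    (X : Type*) [MeasurableSpace X] (μ : Measure X) [IsProbabilityMeasure μ]
    [MulAction G X]
    (hBorel : Measurable fun p : G × X => p.1 • p.2)
    (hmp : ∀ g : G, MeasurePreserving (fun x : X => g • x) μ μ)
    (hfree : ∀ (g : G) (x : X), g • x = x → g = 1)
    (c : X → G) (hc : Measurable c)
    (hT : MeasurePreserving (fun x : X => c x • x) μ μ) :
    -- π(g) is a unitary: the underlying transformation preserves m × μ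
    MeasurePreserving (fun p : G × X => (c p.2 * p.1, c p.2 • p.2)) (m.prod μ) (m.prod μ)
    ∧
    -- π(g) commutes with the right translations ρ_{h'}
    (∀ (ξ : G × X → ℂ) (h' : G),
      (fun p : G × X => (fun q : G × X => ξ (q.1 * h', q.2))
          ((c p.2)⁻¹ * p.1, (c p.2)⁻¹ • p.2))
        = fun p : G × X =>
            (fun q : G × X => ξ ((c q.2)⁻¹ * q.1, (c q.2)⁻¹ • q.2)) (p.1 * h', p.2))
    ∧
    -- π(g) commutes with the operators f̃, (f̃ ξ)(h,x) = f(h⁻¹ • x) ξ(h,x)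
    (∀ (ξ : G × X → ℂ) (f : X → ℂ),
      (fun p : G × X => (fun q : G × X => f (q.1⁻¹ • q.2) * ξ q)
          ((c p.2)⁻¹ * p.1, (c p.2)⁻¹ • p.2))
        = fun p : G × X =>
            f (p.1⁻¹ • p.2) *
              (fun q : G × X => ξ ((c q.2)⁻¹ * q.1, (c q.2)⁻¹ • q.2)) p) :=
  full_group_repr_in_crossed_product_general G m X μ c hc hT
end

section
/- Let G be a locally compact Polish group acting freely and measure-preservingly on (X,μ), and let T ∈ Aut(G × X, m × μ) commute with all right translations ρ_{h'} in the first coordinate and with all operators f̃ (f ∈ L^∞(X)). Then T is of the form T(h,x) = (g(x)h, g(x)·x) for some measurable g: X → G with x ↦ g(x)·x in [R_G]; in particular [R_G] = Aut(G×X, m×μ) ∩ U(L^∞(X) ⋊ G). -/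
/-!
Commuting with the right translations forces `T (h, x) = (g x * h, t x)` with
`g x = (T (1, x)).1` and `t x = (T (1, x)).2`. Invariance of `(h, x) ↦ h⁻¹ • x` then gives
`t x = g x • x` almost everywhere. Finally `t` preserves `μ`: by left invariance of `m`, every
fibre of `T⁻¹' (S ×ˢ A)` over `x ∈ t⁻¹' A` has measure `m S`, so
`m S * μ (t⁻¹' A) = (m × μ) (T⁻¹' (S ×ˢ A)) = m S * μ A`, and `m S` can be cancelled for a
set `S` of positive finite measure, which exists because `m` is σ-finite and nonzero.
-/

open MeasureTheory Measure

def skewProduct {G X : Type*} [Mul G] (g : X → G) (t : X → X) (p : G × X) : G × X :=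
  (g p.2 * p.1, t p.2)

lemma eq_skewProduct_of_commute_mul_right {G X : Type*} [MulOneClass G] (T : G × X → G × X)
    (hT : ∀ h' : G, ∀ p : G × X, T (p.1 * h', p.2) = ((T p).1 * h', (T p).2)) :
    T = skewProduct (fun x => (T (1, x)).1) (fun x => (T (1, x)).2) :=
  funext fun p => by simpa [skewProduct] using hT p.1 (1, p.2)

lemma eq_smul_of_inv_smul_eq {G X : Type*} [Group G] [MulAction G X] {g h : G} {x y : X}
    (hxy : (g * h)⁻¹ • y = h⁻¹ • x) : y = g • x := by
  rwa [mul_inv_rev, mul_smul, inv_smul_eq_iff, smul_inv_smul, inv_smul_eq_iff] at hxy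

namespace MeasureTheory.Measure

variable {G X : Type*} [MeasurableSpace G]

lemma exists_measurableSet_measure_pos_lt_top (m : Measure G) [SigmaFinite m] [NeZero m] :
    ∃ S : Set G, MeasurableSet S ∧ 0 < m S ∧ m S < ⊤ := by
  have hunion : m (⋃ n, spanningSets m n) ≠ 0 := by
    rw [iUnion_spanningSets]
    exact measure_univ_ne_zero.mpr (NeZero.ne m)
  obtain ⟨n, hn⟩ := exists_measure_pos_of_not_measure_iUnion_null hunion
  exact ⟨_, measurableSet_spanningSets m n, hn, measure_spanningSets_lt_top m n⟩

section

variable [Group G] [MeasurableMul G]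

lemma measure_preimage_skewProduct_fibre (m : Measure G) [m.IsMulLeftInvariant] (g : X → G)
    (t : X → X) (S : Set G) (A : Set X) (x : X) :
    m ((fun h => (h, x)) ⁻¹' (skewProduct g t ⁻¹' S ×ˢ A)) =
      (t ⁻¹' A).indicator (fun _ => m S) x := by
  by_cases hx : t x ∈ A
  · simpa [skewProduct, Set.preimage, hx] using measure_preimage_mul m (g x) S
  · simp [skewProduct, Set.preimage, hx]

end

variable [MeasurableSpace X]

lemma ae_of_ae_prod_snd (m : Measure G) [NeZero m] (μ : Measure X) [SFinite μ] {P : X → Prop}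
    (hP : ∀ᵐ p ∂m.prod μ, P p.2) : ∀ᵐ x ∂μ, P x := by
  have : (ae m).NeBot := ae_neBot.mpr (NeZero.ne m)
  exact (ae_ae_of_ae_prod hP).exists.choose_spec

variable [Group G] [MeasurableMul G]

lemma prod_skewProduct_preimage_prod (m : Measure G) [m.IsMulLeftInvariant] [SFinite m]
    (μ : Measure X) [SFinite μ] {g : X → G} {t : X → X} (ht : Measurable t)
    (hmeas : Measurable (skewProduct g t)) {S : Set G} {A : Set X} (hS : MeasurableSet S)
    (hA : MeasurableSet A) :
    m.prod μ (skewProduct g t ⁻¹' S ×ˢ A) = m S * μ (t ⁻¹' A) := by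
  simp_rw [prod_apply_symm (hmeas (hS.prod hA)), measure_preimage_skewProduct_fibre,
    lintegral_indicator_const (ht hA)]

lemma measurePreserving_of_skewProduct (m : Measure G) [m.IsMulLeftInvariant] [SigmaFinite m]
    [NeZero m] (μ : Measure X) [SFinite μ] {g : X → G} {t : X → X} (ht : Measurable t)
    (hskew : MeasurePreserving (skewProduct g t) (m.prod μ) (m.prod μ)) :
    MeasurePreserving t μ μ := by
  obtain ⟨S, hS, hS_pos, hS_fin⟩ := exists_measurableSet_measure_pos_lt_top m
  refine ⟨ht, Measure.ext fun A hA => ?_⟩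
  rw [map_apply ht hA, ← ENNReal.mul_right_inj hS_pos.ne' hS_fin.ne,
    ← prod_skewProduct_preimage_prod m μ ht hskew.measurable hS hA,
    hskew.measure_preimage (hS.prod hA).nullMeasurableSet, prod_prod]

end MeasureTheory.Measure

theorem commutant_automorphism_is_full_group_element_general
    (G : Type*) [Group G] [TopologicalSpace G] [IsTopologicalGroup G]
    [MeasurableSpace G] [BorelSpace G]
    (m : Measure G) [m.IsHaarMeasure] [SigmaFinite m]
    (X : Type*) [MeasurableSpace X]
    (μ : Measure X) [IsProbabilityMeasure μ]
    [MulAction G X]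
    (hBorel : Measurable fun p : G × X => p.1 • p.2)
    (T : (G × X) ≃ᵐ (G × X)) (hT : MeasurePreserving T (m.prod μ) (m.prod μ))
    -- T commutes with the right translations ρ_{h'}
    (hρ : ∀ h' : G, ∀ p : G × X, T (p.1 * h', p.2) = ((T p).1 * h', (T p).2))
    -- T commutes with the operators f̃, i.e. it preserves (h,x) ↦ h⁻¹ • x
    (hf : ∀ᵐ p ∂(m.prod μ), (T p).1⁻¹ • (T p).2 = p.1⁻¹ • p.2) :
    ∃ g : X → G, Measurable g ∧
      (∀ᵐ p ∂(m.prod μ), T p = (g p.2 * p.1, g p.2 • p.2)) ∧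
      MeasurePreserving (fun x : X => g x • x) μ μ := by
  set g : X → G := fun x => (T (1, x)).1
  set t : X → X := fun x => (T (1, x)).2
  have hT_one : Measurable fun x : X => T (1, x) := T.measurable.comp measurable_prodMk_left
  have hg : Measurable g := hT_one.fst
  have hform : ⇑T = skewProduct g t := eq_skewProduct_of_commute_mul_right T hρ
  have ht_eq : ∀ᵐ p ∂m.prod μ, t p.2 = g p.2 • p.2 := by
    filter_upwards [hf] with p hp
    rw [hform] at hp
    exact eq_smul_of_inv_smul_eq hp
  have ht : MeasurePreserving t μ μ :=
    measurePreserving_of_skewProduct m μ hT_one.snd (hform ▸ hT)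
  refine ⟨g, hg, ?_,
    ht.congr (hBorel.comp (hg.prodMk measurable_id)) (ae_of_ae_prod_snd m μ ht_eq)⟩
  filter_upwards [ht_eq] with p hp
  rw [hform, skewProduct, hp]

/-- Let `G` be a locally compact Polish group acting freely and measure-preservingly on
`(X,μ)`, and let `T` be a measure-preserving automorphism of `(G × X, m × μ)` commuting
with all right translations in the first coordinate and with all operators `f̃`
(equivalently, preserving the map `(h,x) ↦ h⁻¹ • x`). Then `T` has the form
`T(h,x) = (g(x)h, g(x) • x)` for a measurable `g : X → G` with `x ↦ g(x) • x` in the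
orbit full group. -/
theorem commutant_automorphism_is_full_group_element
    (G : Type*) [Group G] [TopologicalSpace G] [IsTopologicalGroup G]
    [LocallyCompactSpace G] [PolishSpace G]
    [MeasurableSpace G] [BorelSpace G]
    (m : Measure G) [m.IsHaarMeasure] [SigmaFinite m]
    (X : Type*) [MeasurableSpace X] [StandardBorelSpace X]
    (μ : Measure X) [IsProbabilityMeasure μ]
    [MulAction G X]
    (hBorel : Measurable fun p : G × X => p.1 • p.2)
    (hmp : ∀ g : G, MeasurePreserving (fun x : X => g • x) μ μ)
    (hfree : ∀ (g : G) (x : X), g • x = x → g = 1)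
    (T : (G × X) ≃ᵐ (G × X)) (hT : MeasurePreserving T (m.prod μ) (m.prod μ))
    -- T commutes with the right translations ρ_{h'}
    (hρ : ∀ h' : G, ∀ p : G × X, T (p.1 * h', p.2) = ((T p).1 * h', (T p).2))
    -- T commutes with the operators f̃, i.e. it preserves (h,x) ↦ h⁻¹ • x
    (hf : ∀ᵐ p ∂(m.prod μ), (T p).1⁻¹ • (T p).2 = p.1⁻¹ • p.2) :
    ∃ g : X → G, Measurable g ∧
      (∀ᵐ p ∂(m.prod μ), T p = (g p.2 * p.1, g p.2 • p.2)) ∧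
      MeasurePreserving (fun x : X => g x • x) μ μ :=
  commutant_automorphism_is_full_group_element_general G m X μ hBorel T hT hρ hf
end

section
/- Let G be a Polish group acting freely and measure-preservingly on (X,μ) and suppose R_G admits a quasi-invariant Haar system of probability measures (η_x)_{x∈X} (i.e., [η_x] = [η_y] for a.e. equivalent x, y, and each η_x is supported on the orbit of x). Then the probability measure λ on G defined by λ(A) := ∫_X η_x(A·x) dμ(x) is quasi-invariant under right multiplication: λ(A) = 0 implies λ(Ag) = 0 for all g ∈ G. -/
/-!
Right translation by `g₀` turns `(A g₀) • x` into `A • (g₀ • x)`. Since the action preserves `μ`,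
`∫ η_{g₀ x}(A • g₀ x) dμ(x) = 0`, and quasi-invariance gives `η_x ≪ η_{g₀ x}` for a.e. `x`.
The sets `A • x` need not be measurable, so neither need the integrands be, and a vanishing lower
integral does not make them vanish a.e. One passes through the Radon–Nikodym derivative `ρ` of
the kernel `x ↦ η_x` with respect to `x ↦ η_{g₀ x}` instead:
`η_x(S) ≤ n η_{g₀ x}(S) + η_x {ρ_x > n}`, where the last term is measurable in `x` and tends to
`0` as `n → ∞` because `ρ_x` is a.e. finite.
-/

open MeasureTheory ProbabilityTheory Filter Topology
open scoped ENNReal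

namespace MeasureTheory

variable {β : Type*} [MeasurableSpace β]

theorem Measure.withDensity_apply_le_mul_add (ν : Measure β) {f : β → ℝ≥0∞} (hf : Measurable f)
    (S : Set β) (c : ℝ≥0∞) :
    ν.withDensity f S ≤ c * ν S + ν.withDensity f {y | c < f y} := by
  set B := toMeasurable ν S
  have hC : MeasurableSet {y | f y ≤ c} := measurableSet_le hf measurable_const
  calc ν.withDensity f S ≤ ν.withDensity f B := measure_mono (subset_toMeasurable ν S)
    _ ≤ ν.withDensity f (B ∩ {y | f y ≤ c}) + ν.withDensity f (B \ {y | f y ≤ c}) :=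
      measure_le_inter_add_sdiff _ _ _
    _ ≤ c * ν S + ν.withDensity f {y | c < f y} := by
      gcongr ?_ + ?_
      · rw [withDensity_apply _ ((measurableSet_toMeasurable ν S).inter hC)]
        calc ∫⁻ y in B ∩ {y | f y ≤ c}, f y ∂ν ≤ ∫⁻ _ in B ∩ {y | f y ≤ c}, c ∂ν :=
              setLIntegral_mono measurable_const fun y hy => hy.2
          _ = c * ν (B ∩ {y | f y ≤ c}) := setLIntegral_const _ _
          _ ≤ c * ν S := mul_le_mul_right
            ((measure_mono Set.inter_subset_left).trans_eq (measure_toMeasurable S)) c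
      · exact measure_mono fun y hy => (not_le.mp hy.2 : c < f y)

theorem tendsto_measure_setOf_natCast_lt (ν : Measure β) [IsFiniteMeasure ν] {f : β → ℝ≥0∞}
    (hf : Measurable f) (h_ne_top : ∀ᵐ y ∂ν, f y ≠ ∞) :
    Tendsto (fun n : ℕ => ν {y | (n : ℝ≥0∞) < f y}) atTop (𝓝 0) := by
  have hanti : Antitone fun n : ℕ => {y | (n : ℝ≥0∞) < f y} := fun m n hmn y hy =>
    show (m : ℝ≥0∞) < f y from (Nat.cast_le.mpr hmn).trans_lt hy
  have hInter : ν (⋂ n : ℕ, {y | (n : ℝ≥0∞) < f y}) = 0 := by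
    refine measure_mono_null (fun y hy => ?_) (ae_iff.mp h_ne_top)
    intro hfin
    obtain ⟨n, hn⟩ := ENNReal.exists_nat_gt hfin
    exact lt_asymm hn (Set.mem_iInter.mp hy n)
  simpa only [Function.comp_def, hInter] using tendsto_measure_iInter_atTop
    (fun n => (measurableSet_lt measurable_const hf).nullMeasurableSet) hanti
    ⟨0, measure_ne_top ν _⟩

end MeasureTheory

namespace ProbabilityTheory.Kernel

open MeasurableSpace

variable {α β : Type*} [MeasurableSpace α] [MeasurableSpace β] [CountableOrCountablyGenerated α β]
  {κ η : Kernel α β} [IsFiniteKernel κ] [IsFiniteKernel η]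

theorem apply_le_mul_add_of_absolutelyContinuous {a : α} (ha : κ a ≪ η a) (S : Set β)
    (c : ℝ≥0∞) : κ a S ≤ c * η a S + κ a {y | c < κ.rnDeriv η a y} := by
  have hdens : (η a).withDensity (κ.rnDeriv η a) = κ a := by
    rw [← Kernel.withDensity_apply _ (κ.measurable_rnDeriv η), withDensity_rnDeriv_eq ha]
  rw [← hdens]
  exact (η a).withDensity_apply_le_mul_add (κ.measurable_rnDeriv_right η a) S c

theorem lintegral_apply_eq_zero_of_ae_absolutelyContinuous {μ : Measure α} [IsFiniteMeasure μ]
    (hac : ∀ᵐ a ∂μ, κ a ≪ η a) (S : α → Set β) (h : ∫⁻ a, η a (S a) ∂μ = 0) :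
    ∫⁻ a, κ a (S a) ∂μ = 0 := by
  set r : ℕ → α → ℝ≥0∞ := fun n a => κ a {y | (n : ℝ≥0∞) < κ.rnDeriv η a y}
  have hr_meas : ∀ n, Measurable (r n) := fun n =>
    measurable_kernel_prodMk_left (measurableSet_lt measurable_const (κ.measurable_rnDeriv η))
  have hr_le : ∀ n, ∫⁻ a, κ a (S a) ∂μ ≤ ∫⁻ a, r n a ∂μ := fun n =>
    calc ∫⁻ a, κ a (S a) ∂μ ≤ ∫⁻ a, ((n : ℝ≥0∞) * η a (S a) + r n a) ∂μ :=
          lintegral_mono_ae (hac.mono fun a ha => apply_le_mul_add_of_absolutelyContinuous ha _ _)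
      _ = ∫⁻ a, r n a ∂μ := by
        rw [lintegral_add_right _ (hr_meas n), lintegral_const_mul' _ _ (ENNReal.natCast_ne_top n),
          h, mul_zero, zero_add]
  have hr_tendsto : Tendsto (fun n => ∫⁻ a, r n a ∂μ) atTop (𝓝 0) := by
    simpa using tendsto_lintegral_of_dominated_convergence (fun _ => κ.bound)
      hr_meas (fun n => ae_of_all _ fun a => measure_le_bound κ a _)
      (lintegral_const_lt_top κ.bound_ne_top).ne
      (hac.mono fun a ha => tendsto_measure_setOf_natCast_lt (κ a)
        (κ.measurable_rnDeriv_right η a) (ha.ae_le (κ.rnDeriv_ne_top η)))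
  exact le_antisymm (ge_of_tendsto' hr_tendsto hr_le) zero_le

end ProbabilityTheory.Kernel

theorem integrated_haar_system_right_quasi_invariant_general
    (G : Type*) [Group G]
    [MeasurableSpace G]
    (X : Type*) [MeasurableSpace X] [StandardBorelSpace X]
    (μ : Measure X) [IsProbabilityMeasure μ]
    [MulAction G X]
    (hBorel : Measurable fun p : G × X => p.1 • p.2)
    (hmp : ∀ g : G, MeasurePreserving (fun x : X => g • x) μ μ)
    (η : X → Measure X) (hηprob : ∀ x, IsProbabilityMeasure (η x))
    (hηmeas : ∀ s : Set X, MeasurableSet s → Measurable fun x => η x s)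
    (hηqi : ∃ X' : Set X, μ X'ᶜ = 0 ∧ ∀ x ∈ X', ∀ y ∈ X',
      (∃ g : G, g • x = y) → (∀ s : Set X, η x s = 0 ↔ η y s = 0)) :
    ∀ A : Set G, (∫⁻ x, η x ((fun g : G => g • x) '' A) ∂μ) = 0 →
      ∀ g₀ : G, (∫⁻ x, η x ((fun g : G => g • x) '' ((fun a => a * g₀) '' A)) ∂μ) = 0 := by
  intro A hA g₀
  obtain ⟨X', hX'_ae, hX'_qi⟩ := hηqi
  have : MeasurableSMul₂ G X := ⟨hBorel⟩
  let κ : Kernel X X := ⟨η, Measure.measurable_of_measurable_coe η hηmeas⟩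
  have : IsMarkovKernel κ := ⟨hηprob⟩
  have hac : ∀ᵐ x ∂μ, κ x ≪ κ.comap (g₀ • ·) (measurable_const_smul g₀) x := by
    filter_upwards [hX'_ae, (hmp g₀).quasiMeasurePreserving.ae hX'_ae] with x hx hgx
    exact fun s hs => (hX'_qi x hx _ hgx ⟨g₀, rfl⟩ s).mpr hs
  have hset : ∀ x : X, (fun g : G => g • x) '' ((fun a => a * g₀) '' A) =
      (fun a : G => a • g₀ • x) '' A := fun x => by
    simp only [Set.image_image, mul_smul]
  simp only [hset]
  exact κ.lintegral_apply_eq_zero_of_ae_absolutelyContinuous hac _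
    (((hmp g₀).lintegral_comp_emb (measurableEmbedding_const_smul g₀) _).trans hA)

/-- Let a Polish group `G` act freely and measure-preservingly on `(X,μ)`, and let
`(η_x)` be a quasi-invariant Haar system of probability measures on the orbit
equivalence relation (each `η_x` supported on the orbit of `x`, with `[η_x] = [η_y]`
for a.e. equivalent `x, y`). Then the measure `λ(A) := ∫ η_x(A • x) dμ(x)` on `G` is
quasi-invariant under right multiplication: `λ(A) = 0` implies `λ(A g) = 0`. -/
theorem integrated_haar_system_right_quasi_invariant
    (G : Type*) [Group G] [TopologicalSpace G] [PolishSpace G] [IsTopologicalGroup G]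
    [MeasurableSpace G] [BorelSpace G]
    (X : Type*) [MeasurableSpace X] [StandardBorelSpace X]
    (μ : Measure X) [IsProbabilityMeasure μ]
    [MulAction G X]
    (hBorel : Measurable fun p : G × X => p.1 • p.2)
    (hmp : ∀ g : G, MeasurePreserving (fun x : X => g • x) μ μ)
    (hfree : ∀ (g : G) (x : X), g • x = x → g = 1)
    (η : X → Measure X) (hηprob : ∀ x, IsProbabilityMeasure (η x))
    (hηmeas : ∀ s : Set X, MeasurableSet s → Measurable fun x => η x s)
    (hηsupp : ∀ x, η x ((MulAction.orbit G x)ᶜ) = 0)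
    (hηqi : ∃ X' : Set X, μ X'ᶜ = 0 ∧ ∀ x ∈ X', ∀ y ∈ X',
      (∃ g : G, g • x = y) → (∀ s : Set X, η x s = 0 ↔ η y s = 0)) :
    ∀ A : Set G, (∫⁻ x, η x ((fun g : G => g • x) '' A) ∂μ) = 0 →
      ∀ g₀ : G, (∫⁻ x, η x ((fun g : G => g • x) '' ((fun a => a * g₀) '' A)) ∂μ) = 0 :=
  integrated_haar_system_right_quasi_invariant_general G X μ hBorel hmp η hηprob hηmeas hηqi
end
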